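/- arXiv:2305.14417 — 5 statements merged into one kernel-verified Lean document; each statement's English description precedes it below -/
import Mathlib

section
/- Uniqueness of the stable fixed point at a given Yukawa level (generalised Michel theorem at one loop): fix the Yukawa couplings y, and suppose λ₁ and λ₂ are two distinct fully symmetric real tensors satisfying β^λ(λ₁, y) = 0 and β^λ(λ₂, y) = 0 (two quartic fixed points at the same Yukawa level). If A_y(λ₁) > A_y(λ₂), then λ₁ is not a stable fixed point: for the nonzero symmetric tensor μ = λ₁ − λ₂, the second derivative (d²/dt²) A_y(λ₁ + t μ) evaluated at t = 0 is strictly negative, so the Hessian of A_y at λ₁ is not positive semidefinite. -/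
set_option linter.unusedSectionVars false
set_option maxHeartbeats 1000000

section MichelAux

variable {ι : Type*} [Fintype ι]

private def S2x (a b : ι → ι → ι → ι → ℝ) : ℝ :=
  ∑ i, ∑ j, ∑ k, ∑ l, a i j k l * b i j k l

private def T3x (a b c : ι → ι → ι → ι → ℝ) : ℝ :=
  ∑ i, ∑ j, ∑ k, ∑ l, ∑ m, ∑ n, a i j k l * b k l m n * c m n i j

private def XTx (X a : ι → ι → ι → ι → ℝ) : ℝ :=
  ∑ i, ∑ j, ∑ k, ∑ l, X i j k l * a i j k l

private def ZTx (Z : ι → ι → ℝ) (a b : ι → ι → ι → ι → ℝ) : ℝ :=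
  ∑ i, ∑ j, ∑ k, ∑ l, ∑ m, Z i j * a i k l m * b j k l m

private lemma csum4 {F G : ι → ι → ι → ι → ℝ} (h : ∀ a b c d, F a b c d = G a b c d) :
    ∑ a, ∑ b, ∑ c, ∑ d, F a b c d = ∑ a, ∑ b, ∑ c, ∑ d, G a b c d :=
  Finset.sum_congr rfl fun a _ => Finset.sum_congr rfl fun b _ =>
    Finset.sum_congr rfl fun c _ => Finset.sum_congr rfl fun d _ => h a b c d

private lemma csum5 {F G : ι → ι → ι → ι → ι → ℝ} (h : ∀ a b c d e, F a b c d e = G a b c d e) :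
    ∑ a, ∑ b, ∑ c, ∑ d, ∑ e, F a b c d e = ∑ a, ∑ b, ∑ c, ∑ d, ∑ e, G a b c d e :=
  Finset.sum_congr rfl fun a _ => Finset.sum_congr rfl fun b _ =>
    Finset.sum_congr rfl fun c _ => Finset.sum_congr rfl fun d _ =>
      Finset.sum_congr rfl fun e _ => h a b c d e

private lemma csum6 {F G : ι → ι → ι → ι → ι → ι → ℝ}
    (h : ∀ a b c d e f, F a b c d e f = G a b c d e f) :
    ∑ a, ∑ b, ∑ c, ∑ d, ∑ e, ∑ f, F a b c d e f
      = ∑ a, ∑ b, ∑ c, ∑ d, ∑ e, ∑ f, G a b c d e f :=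
  Finset.sum_congr rfl fun a _ => Finset.sum_congr rfl fun b _ =>
    Finset.sum_congr rfl fun c _ => Finset.sum_congr rfl fun d _ =>
      Finset.sum_congr rfl fun e _ => Finset.sum_congr rfl fun f _ => h a b c d e f

private lemma sw12_5 (F : ι → ι → ι → ι → ι → ℝ) :
    ∑ a, ∑ b, ∑ c, ∑ d, ∑ e, F a b c d e = ∑ a, ∑ b, ∑ c, ∑ d, ∑ e, F b a c d e :=
  Finset.sum_comm

private lemma sw23_5 (F : ι → ι → ι → ι → ι → ℝ) :
    ∑ a, ∑ b, ∑ c, ∑ d, ∑ e, F a b c d e = ∑ a, ∑ b, ∑ c, ∑ d, ∑ e, F a c b d e :=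
  Finset.sum_congr rfl fun _ _ => Finset.sum_comm

private lemma sw34_5 (F : ι → ι → ι → ι → ι → ℝ) :
    ∑ a, ∑ b, ∑ c, ∑ d, ∑ e, F a b c d e = ∑ a, ∑ b, ∑ c, ∑ d, ∑ e, F a b d c e :=
  Finset.sum_congr rfl fun _ _ => Finset.sum_congr rfl fun _ _ => Finset.sum_comm

private lemma sw45_5 (F : ι → ι → ι → ι → ι → ℝ) :
    ∑ a, ∑ b, ∑ c, ∑ d, ∑ e, F a b c d e = ∑ a, ∑ b, ∑ c, ∑ d, ∑ e, F a b c e d :=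
  Finset.sum_congr rfl fun _ _ => Finset.sum_congr rfl fun _ _ =>
    Finset.sum_congr rfl fun _ _ => Finset.sum_comm

private lemma rotLast4_5 (F : ι → ι → ι → ι → ι → ℝ) :
    ∑ a, ∑ b, ∑ c, ∑ d, ∑ e, F a b c d e = ∑ a, ∑ b, ∑ c, ∑ d, ∑ e, F a c d e b :=
  (sw45_5 F).trans ((sw34_5 _).trans (sw23_5 _))

private lemma rel13_5 (F : ι → ι → ι → ι → ι → ℝ) :
    ∑ a, ∑ b, ∑ c, ∑ d, ∑ e, F a b c d e = ∑ a, ∑ b, ∑ c, ∑ d, ∑ e, F c b a d e :=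
  (sw12_5 F).trans ((sw23_5 _).trans (sw12_5 _))

private lemma cyc4_5 (F : ι → ι → ι → ι → ι → ℝ) :
    ∑ a, ∑ b, ∑ c, ∑ d, ∑ e, F a b c d e = ∑ a, ∑ b, ∑ c, ∑ d, ∑ e, F b c d a e :=
  (sw34_5 F).trans ((sw23_5 _).trans (sw12_5 _))

private lemma sw12_6 (F : ι → ι → ι → ι → ι → ι → ℝ) :
    ∑ a, ∑ b, ∑ c, ∑ d, ∑ e, ∑ f, F a b c d e f
      = ∑ a, ∑ b, ∑ c, ∑ d, ∑ e, ∑ f, F b a c d e f :=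
  Finset.sum_comm

private lemma sw23_6 (F : ι → ι → ι → ι → ι → ι → ℝ) :
    ∑ a, ∑ b, ∑ c, ∑ d, ∑ e, ∑ f, F a b c d e f
      = ∑ a, ∑ b, ∑ c, ∑ d, ∑ e, ∑ f, F a c b d e f :=
  Finset.sum_congr rfl fun _ _ => Finset.sum_comm

private lemma sw34_6 (F : ι → ι → ι → ι → ι → ι → ℝ) :
    ∑ a, ∑ b, ∑ c, ∑ d, ∑ e, ∑ f, F a b c d e f
      = ∑ a, ∑ b, ∑ c, ∑ d, ∑ e, ∑ f, F a b d c e f :=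
  Finset.sum_congr rfl fun _ _ => Finset.sum_congr rfl fun _ _ => Finset.sum_comm

private lemma sw45_6 (F : ι → ι → ι → ι → ι → ι → ℝ) :
    ∑ a, ∑ b, ∑ c, ∑ d, ∑ e, ∑ f, F a b c d e f
      = ∑ a, ∑ b, ∑ c, ∑ d, ∑ e, ∑ f, F a b c e d f :=
  Finset.sum_congr rfl fun _ _ => Finset.sum_congr rfl fun _ _ =>
    Finset.sum_congr rfl fun _ _ => Finset.sum_comm

private lemma sw56_6 (F : ι → ι → ι → ι → ι → ι → ℝ) :
    ∑ a, ∑ b, ∑ c, ∑ d, ∑ e, ∑ f, F a b c d e f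
      = ∑ a, ∑ b, ∑ c, ∑ d, ∑ e, ∑ f, F a b c d f e :=
  Finset.sum_congr rfl fun _ _ => Finset.sum_congr rfl fun _ _ =>
    Finset.sum_congr rfl fun _ _ => Finset.sum_congr rfl fun _ _ => Finset.sum_comm

private lemma relPair6 (F : ι → ι → ι → ι → ι → ι → ℝ) :
    ∑ a, ∑ b, ∑ c, ∑ d, ∑ e, ∑ f, F a b c d e f
      = ∑ a, ∑ b, ∑ c, ∑ d, ∑ e, ∑ f, F c d a b e f :=
  (sw23_6 F).trans ((sw12_6 _).trans ((sw34_6 _).trans (sw23_6 _)))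

private lemma rel234_6 (F : ι → ι → ι → ι → ι → ι → ℝ) :
    ∑ a, ∑ b, ∑ c, ∑ d, ∑ e, ∑ f, F a b c d e f
      = ∑ a, ∑ b, ∑ c, ∑ d, ∑ e, ∑ f, F a c d b e f :=
  (sw34_6 F).trans (sw23_6 _)

private lemma rot6 (F : ι → ι → ι → ι → ι → ι → ℝ) :
    ∑ a, ∑ b, ∑ c, ∑ d, ∑ e, ∑ f, F a b c d e f
      = ∑ a, ∑ b, ∑ c, ∑ d, ∑ e, ∑ f, F b c d e f a :=
  (sw56_6 F).trans ((sw45_6 _).trans ((sw34_6 _).trans ((sw23_6 _).trans (sw12_6 _))))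

private lemma rot2_6 (F : ι → ι → ι → ι → ι → ι → ℝ) :
    ∑ a, ∑ b, ∑ c, ∑ d, ∑ e, ∑ f, F a b c d e f
      = ∑ a, ∑ b, ∑ c, ∑ d, ∑ e, ∑ f, F c d e f a b :=
  (rot6 F).trans (rot6 _)

private lemma fsPair (Q : ι → ι → ι → ι → ℝ)
    (h12 : ∀ i j k l, Q i j k l = Q j i k l)
    (h23 : ∀ i j k l, Q i j k l = Q i k j l)
    (h34 : ∀ i j k l, Q i j k l = Q i j l k) :
    ∀ i j k l, Q i j k l = Q k l i j := fun i j k l =>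
  (h23 i j k l).trans ((h12 i k j l).trans ((h34 k i j l).trans (h23 k i l j)))

private lemma fsIljk (Q : ι → ι → ι → ι → ℝ)
    (h23 : ∀ i j k l, Q i j k l = Q i k j l)
    (h34 : ∀ i j k l, Q i j k l = Q i j l k) :
    ∀ i j k l, Q i j k l = Q i l j k := fun i j k l =>
  (h34 i j k l).trans (h23 i j l k)

private lemma fs13 (Q : ι → ι → ι → ι → ℝ)
    (h12 : ∀ i j k l, Q i j k l = Q j i k l)
    (h23 : ∀ i j k l, Q i j k l = Q i k j l) :
    ∀ i j k l, Q i j k l = Q k j i l := fun i j k l =>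
  (h12 i j k l).trans ((h23 j i k l).trans (h12 j k i l))

private lemma fsRotL (Q : ι → ι → ι → ι → ℝ)
    (h12 : ∀ i j k l, Q i j k l = Q j i k l)
    (h23 : ∀ i j k l, Q i j k l = Q i k j l)
    (h34 : ∀ i j k l, Q i j k l = Q i j l k) :
    ∀ i j k l, Q i j k l = Q l i j k := fun i j k l =>
  (h34 i j k l).trans ((h23 i j l k).trans (h12 i l j k))

private lemma S2sym (a b : ι → ι → ι → ι → ℝ) : S2x a b = S2x b a :=
  csum4 fun i j k l => mul_comm (a i j k l) (b i j k l)

private lemma T3cyc (a b c : ι → ι → ι → ι → ℝ) : T3x a b c = T3x c a b := by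
  calc T3x a b c
      = ∑ i, ∑ j, ∑ k, ∑ l, ∑ m, ∑ n, a i j k l * b k l m n * c m n i j := rfl
    _ = ∑ i, ∑ j, ∑ k, ∑ l, ∑ m, ∑ n, a k l m n * b m n i j * c i j k l := rot2_6 _
    _ = ∑ i, ∑ j, ∑ k, ∑ l, ∑ m, ∑ n, c i j k l * a k l m n * b m n i j :=
        csum6 fun i j k l m n => by ring
    _ = T3x c a b := rfl

private lemma ZTsym (Z : ι → ι → ℝ) (hZ : ∀ i j, Z i j = Z j i)
    (a b : ι → ι → ι → ι → ℝ) : ZTx Z a b = ZTx Z b a := by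
  calc ZTx Z a b
      = ∑ i, ∑ j, ∑ k, ∑ l, ∑ m, Z j i * a i k l m * b j k l m :=
        csum5 fun i j k l m => by rw [hZ i j]
    _ = ∑ i, ∑ j, ∑ k, ∑ l, ∑ m, Z i j * a j k l m * b i k l m := sw12_5 _
    _ = ∑ i, ∑ j, ∑ k, ∑ l, ∑ m, Z i j * b i k l m * a j k l m :=
        csum5 fun i j k l m => by ring
    _ = ZTx Z b a := rfl

section contract
variable (P Q : ι → ι → ι → ι → ℝ)
variable (hq12 : ∀ i j k l, Q i j k l = Q j i k l)
variable (hq23 : ∀ i j k l, Q i j k l = Q i k j l)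
variable (hq34 : ∀ i j k l, Q i j k l = Q i j l k)
variable (hp12 : ∀ i j k l, P i j k l = P j i k l)
variable (hp23 : ∀ i j k l, P i j k l = P i k j l)
variable (hp34 : ∀ i j k l, P i j k l = P i j l k)

include hq12 hq23 hq34 in
private lemma A1x :
    (∑ i, ∑ j, ∑ k, ∑ l, ∑ m, ∑ n, Q i j k l * (P i j m n * P m n k l)) = T3x Q P P := by
  calc (∑ i, ∑ j, ∑ k, ∑ l, ∑ m, ∑ n, Q i j k l * (P i j m n * P m n k l))
      = ∑ i, ∑ j, ∑ k, ∑ l, ∑ m, ∑ n, Q k l i j * (P i j m n * P m n k l) :=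
        csum6 fun i j k l m n => by rw [fsPair Q hq12 hq23 hq34 i j k l]
    _ = ∑ i, ∑ j, ∑ k, ∑ l, ∑ m, ∑ n, Q i j k l * (P k l m n * P m n i j) := relPair6 _
    _ = ∑ i, ∑ j, ∑ k, ∑ l, ∑ m, ∑ n, Q i j k l * P k l m n * P m n i j :=
        csum6 fun i j k l m n => by ring
    _ = T3x Q P P := rfl

include hq12 hq23 hq34 in
private lemma A2x :
    (∑ i, ∑ j, ∑ k, ∑ l, ∑ m, ∑ n, Q i j k l * (P i k m n * P m n j l)) = T3x Q P P := by
  calc (∑ i, ∑ j, ∑ k, ∑ l, ∑ m, ∑ n, Q i j k l * (P i k m n * P m n j l))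
      = ∑ i, ∑ j, ∑ k, ∑ l, ∑ m, ∑ n, Q i k j l * (P i k m n * P m n j l) :=
        csum6 fun i j k l m n => by rw [hq23 i j k l]
    _ = ∑ i, ∑ j, ∑ k, ∑ l, ∑ m, ∑ n, Q i j k l * (P i j m n * P m n k l) := sw23_6 _
    _ = T3x Q P P := A1x P Q hq12 hq23 hq34

include hq12 hq23 hq34 in
private lemma A3x :
    (∑ i, ∑ j, ∑ k, ∑ l, ∑ m, ∑ n, Q i j k l * (P i l m n * P m n j k)) = T3x Q P P := by
  calc (∑ i, ∑ j, ∑ k, ∑ l, ∑ m, ∑ n, Q i j k l * (P i l m n * P m n j k))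
      = ∑ i, ∑ j, ∑ k, ∑ l, ∑ m, ∑ n, Q i l j k * (P i l m n * P m n j k) :=
        csum6 fun i j k l m n => by rw [fsIljk Q hq23 hq34 i j k l]
    _ = ∑ i, ∑ j, ∑ k, ∑ l, ∑ m, ∑ n, Q i j k l * (P i j m n * P m n k l) := rel234_6 _
    _ = T3x Q P P := A1x P Q hq12 hq23 hq34

private lemma B1x (Z : ι → ι → ℝ) :
    (∑ i, ∑ j, ∑ k, ∑ l, ∑ m, Z i m * (Q i j k l * P m j k l)) = ZTx Z Q P := by
  calc (∑ i, ∑ j, ∑ k, ∑ l, ∑ m, Z i m * (Q i j k l * P m j k l))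
      = ∑ i, ∑ j, ∑ k, ∑ l, ∑ m, Z i j * (Q i k l m * P j k l m) := rotLast4_5 _
    _ = ∑ i, ∑ j, ∑ k, ∑ l, ∑ m, Z i j * Q i k l m * P j k l m :=
        csum5 fun i j k l m => by ring
    _ = ZTx Z Q P := rfl

include hq12 hp12 in
private lemma B2x (Z : ι → ι → ℝ) :
    (∑ i, ∑ j, ∑ k, ∑ l, ∑ m, Z j m * (Q i j k l * P i m k l)) = ZTx Z Q P := by
  calc (∑ i, ∑ j, ∑ k, ∑ l, ∑ m, Z j m * (Q i j k l * P i m k l))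
      = ∑ i, ∑ j, ∑ k, ∑ l, ∑ m, Z j m * (Q j i k l * P m i k l) :=
        csum5 fun i j k l m => by rw [hq12 i j k l, hp12 i m k l]
    _ = ∑ i, ∑ j, ∑ k, ∑ l, ∑ m, Z i m * (Q i j k l * P m j k l) := sw12_5 _
    _ = ZTx Z Q P := B1x P Q Z

include hq12 hq23 hp12 hp23 in
private lemma B3x (Z : ι → ι → ℝ) :
    (∑ i, ∑ j, ∑ k, ∑ l, ∑ m, Z k m * (Q i j k l * P i j m l)) = ZTx Z Q P := by
  calc (∑ i, ∑ j, ∑ k, ∑ l, ∑ m, Z k m * (Q i j k l * P i j m l))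
      = ∑ i, ∑ j, ∑ k, ∑ l, ∑ m, Z k m * (Q k j i l * P m j i l) :=
        csum5 fun i j k l m => by
          rw [fs13 Q hq12 hq23 i j k l, fs13 P hp12 hp23 i j m l]
    _ = ∑ i, ∑ j, ∑ k, ∑ l, ∑ m, Z i m * (Q i j k l * P m j k l) := rel13_5 _
    _ = ZTx Z Q P := B1x P Q Z

include hq12 hq23 hq34 hp12 hp23 hp34 in
private lemma B4x (Z : ι → ι → ℝ) :
    (∑ i, ∑ j, ∑ k, ∑ l, ∑ m, Z l m * (Q i j k l * P i j k m)) = ZTx Z Q P := by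
  calc (∑ i, ∑ j, ∑ k, ∑ l, ∑ m, Z l m * (Q i j k l * P i j k m))
      = ∑ i, ∑ j, ∑ k, ∑ l, ∑ m, Z l m * (Q l i j k * P m i j k) :=
        csum5 fun i j k l m => by
          rw [fsRotL Q hq12 hq23 hq34 i j k l, fsRotL P hp12 hp23 hp34 i j k m]
    _ = ∑ i, ∑ j, ∑ k, ∑ l, ∑ m, Z i m * (Q i j k l * P m j k l) := cyc4_5 _
    _ = ZTx Z Q P := B1x P Q Z

end contract

private lemma term1x (P Q : ι → ι → ι → ι → ℝ) (t : ℝ) :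
    (∑ i, ∑ j, ∑ k, ∑ l, (P i j k l + t * Q i j k l) * (P i j k l + t * Q i j k l))
      = S2x P P + (S2x P Q + S2x Q P) * t + S2x Q Q * t ^ 2 := by
  have h : ∀ a b : ℝ, (a + t * b) * (a + t * b) = a * a + (a * b + b * a) * t + b * b * t ^ 2 :=
    fun a b => by ring
  simp only [S2x, h, Finset.sum_add_distrib, ← Finset.sum_mul]

private lemma term2x (P Q : ι → ι → ι → ι → ℝ) (t : ℝ) :
    (∑ i, ∑ j, ∑ k, ∑ l, ∑ m, ∑ n,
        (P i j k l + t * Q i j k l) * (P k l m n + t * Q k l m n) * (P m n i j + t * Q m n i j))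
      = T3x P P P + (T3x Q P P + T3x P Q P + T3x P P Q) * t
        + (T3x P Q Q + T3x Q P Q + T3x Q Q P) * t ^ 2 + T3x Q Q Q * t ^ 3 := by
  have h : ∀ a b c d e f : ℝ, (a + t * b) * (c + t * d) * (e + t * f)
      = a * c * e + (b * c * e + a * d * e + a * c * f) * t
        + (a * d * f + b * c * f + b * d * e) * t ^ 2 + b * d * f * t ^ 3 :=
    fun a b c d e f => by ring
  simp only [T3x, h, Finset.sum_add_distrib, ← Finset.sum_mul]

private lemma term3x (X P Q : ι → ι → ι → ι → ℝ) (t : ℝ) :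
    (∑ i, ∑ j, ∑ k, ∑ l, X i j k l * (P i j k l + t * Q i j k l))
      = XTx X P + XTx X Q * t := by
  have h : ∀ x a b : ℝ, x * (a + t * b) = x * a + x * b * t := fun x a b => by ring
  simp only [XTx, h, Finset.sum_add_distrib, ← Finset.sum_mul]

private lemma term4x (Z : ι → ι → ℝ) (P Q : ι → ι → ι → ι → ℝ) (t : ℝ) :
    (∑ i, ∑ j, ∑ k, ∑ l, ∑ m,
        Z i j * (P i k l m + t * Q i k l m) * (P j k l m + t * Q j k l m))
      = ZTx Z P P + (ZTx Z P Q + ZTx Z Q P) * t + ZTx Z Q Q * t ^ 2 := by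
  have h : ∀ z a b c d : ℝ, z * (a + t * b) * (c + t * d)
      = z * a * c + (z * a * d + z * b * c) * t + z * b * d * t ^ 2 := fun z a b c d => by ring
  simp only [ZTx, h, Finset.sum_add_distrib, ← Finset.sum_mul]

private lemma itd2x (a b c d : ℝ) :
    iteratedDeriv 2 (fun t : ℝ => a + b * t + c * t ^ 2 + d * t ^ 3) 0 = 2 * c := by
  have hD : ∀ x : ℝ, HasDerivAt (fun t : ℝ => a + b * t + c * t ^ 2 + d * t ^ 3)
      (b + 2 * c * x + 3 * d * x ^ 2) x := by
    intro x
    have h1 : HasDerivAt (fun _ : ℝ => a) 0 x := hasDerivAt_const x a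
    have h2 : HasDerivAt (fun t : ℝ => b * t) b x := by
      simpa using (hasDerivAt_id x).const_mul b
    have h3 : HasDerivAt (fun t : ℝ => c * t ^ 2) (c * (2 * x)) x := by
      simpa using (hasDerivAt_pow 2 x).const_mul c
    have h4 : HasDerivAt (fun t : ℝ => d * t ^ 3) (d * (3 * x ^ 2)) x := by
      simpa using (hasDerivAt_pow 3 x).const_mul d
    have := ((h1.add h2).add h3).add h4
    refine this.congr_deriv ?_
    ring
  have hD2 : ∀ x : ℝ, HasDerivAt (fun t : ℝ => b + 2 * c * t + 3 * d * t ^ 2)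
      (2 * c + 6 * d * x) x := by
    intro x
    have h1 : HasDerivAt (fun _ : ℝ => b) 0 x := hasDerivAt_const x b
    have h2 : HasDerivAt (fun t : ℝ => 2 * c * t) (2 * c) x := by
      simpa using (hasDerivAt_id x).const_mul (2 * c)
    have h3 : HasDerivAt (fun t : ℝ => 3 * d * t ^ 2) (3 * d * (2 * x)) x := by
      simpa using (hasDerivAt_pow 2 x).const_mul (3 * d)
    have := (h1.add h2).add h3
    refine this.congr_deriv ?_
    ring
  have e1 : deriv (fun t : ℝ => a + b * t + c * t ^ 2 + d * t ^ 3)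
      = fun x : ℝ => b + 2 * c * x + 3 * d * x ^ 2 := funext fun x => (hD x).deriv
  rw [show (2 : ℕ) = 1 + 1 from rfl, iteratedDeriv_succ, iteratedDeriv_one, e1]
  have := (hD2 0).deriv
  simpa using this

end MichelAux


open Matrix

noncomputable section

/-- Entrywise complex conjugate of a matrix. -/
def mconj {Nf : ℕ} (A : Matrix (Fin Nf) (Fin Nf) ℂ) : Matrix (Fin Nf) (Fin Nf) ℂ :=
  A.map (starRingEnd ℂ)

/-- `Z_{ij} = Tr(y_i ȳ_j + ȳ_i y_j)` (a real number). -/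
def Zw {Ns Nf : ℕ} (y : Fin Ns → Matrix (Fin Nf) (Fin Nf) ℂ) (i j : Fin Ns) : ℝ :=
  (Matrix.trace (y i * mconj (y j) + mconj (y i) * y j)).re

/-- `X_{ijkl} = (1/4) Σ_σ Tr(y_{σ(i)} ȳ_{σ(j)} y_{σ(k)} ȳ_{σ(l)})`,
summing over all 24 permutations of the index list `(i,j,k,l)`. -/
def Xw {Ns Nf : ℕ} (y : Fin Ns → Matrix (Fin Nf) (Fin Nf) ℂ) (i j k l : Fin Ns) : ℝ :=
  (1 / 4) * (∑ σ : Equiv.Perm (Fin 4),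
    Matrix.trace (y (![i, j, k, l] (σ 0)) * mconj (y (![i, j, k, l] (σ 1))) *
      (y (![i, j, k, l] (σ 2)) * mconj (y (![i, j, k, l] (σ 3)))))).re

/-- Full permutation symmetry of the quartic coupling tensor. -/
def FullySymm {Ns : ℕ} (lam : Fin Ns → Fin Ns → Fin Ns → Fin Ns → ℝ) : Prop :=
  ∀ i j k l, lam i j k l = lam j i k l ∧ lam i j k l = lam i k j l ∧
    lam i j k l = lam i j l k

/-- One-loop quartic beta function for Weyl fermions (α = 2). -/
def betaLamW {Ns Nf : ℕ} (ε : ℝ) (lam : Fin Ns → Fin Ns → Fin Ns → Fin Ns → ℝ)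
    (y : Fin Ns → Matrix (Fin Nf) (Fin Nf) ℂ) (i j k l : Fin Ns) : ℝ :=
  -ε * lam i j k l
    + ∑ m, ∑ n, (lam i j m n * lam m n k l + lam i k m n * lam m n j l
        + lam i l m n * lam m n j k)
    - 4 * Xw y i j k l
    + (1 / 2) * ∑ m, (Zw y i m * lam m j k l + Zw y j m * lam i m k l
        + Zw y k m * lam i j m l + Zw y l m * lam i j k m)

/-- One-loop Yukawa beta function for Weyl fermions (α = 2). -/
def betaYW {Ns Nf : ℕ} (ε : ℝ) (y : Fin Ns → Matrix (Fin Nf) (Fin Nf) ℂ) (i : Fin Ns) :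
    Matrix (Fin Nf) (Fin Nf) ℂ :=
  (-(1 / 2) * (ε : ℂ)) • y i
    + (1 / 2 : ℂ) • ∑ j, (y j * mconj (y j) * y i + y i * mconj (y j) * y j
        + (4 : ℂ) • (y j * mconj (y i) * y j))
    + (1 / 2 : ℂ) • ∑ j, ((Zw y i j : ℂ) • y j)

/-- `a₀ = λ_{iijj}`. -/
def a0inv {Ns : ℕ} (lam : Fin Ns → Fin Ns → Fin Ns → Fin Ns → ℝ) : ℝ :=
  ∑ i, ∑ j, lam i i j j

/-- `a₁ = λ_{iimn} λ_{jjmn}`. -/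
def a1inv {Ns : ℕ} (lam : Fin Ns → Fin Ns → Fin Ns → Fin Ns → ℝ) : ℝ :=
  ∑ m, ∑ n, (∑ i, lam i i m n) * (∑ j, lam j j m n)

/-- `S = λ_{ijkl} λ_{ijkl} = ‖λ‖²`. -/
def Sinv {Ns : ℕ} (lam : Fin Ns → Fin Ns → Fin Ns → Fin Ns → ℝ) : ℝ :=
  ∑ i, ∑ j, ∑ k, ∑ l, lam i j k l ^ 2

/-- `b₀ = Z_{ii}`. -/
def b0inv {Ns Nf : ℕ} (y : Fin Ns → Matrix (Fin Nf) (Fin Nf) ℂ) : ℝ :=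
  ∑ i, Zw y i i

/-- `b₁ = Z_{ij} Z_{ij} − b₀²/Ns`. -/
def b1inv {Ns Nf : ℕ} (y : Fin Ns → Matrix (Fin Nf) (Fin Nf) ℂ) : ℝ :=
  (∑ i, ∑ j, Zw y i j ^ 2) - b0inv y ^ 2 / (Ns : ℝ)

/-- `b₂ = Σ_{i,j} (λ_{ijkk} − (a₀/Ns) δ_{ij} + Z_{ij} − (b₀/Ns) δ_{ij})²`. -/
def b2inv {Ns Nf : ℕ} (lam : Fin Ns → Fin Ns → Fin Ns → Fin Ns → ℝ)
    (y : Fin Ns → Matrix (Fin Nf) (Fin Nf) ℂ) : ℝ :=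
  ∑ i, ∑ j, ((∑ k, lam i j k k) - (a0inv lam / (Ns : ℝ)) * (if i = j then 1 else 0)
      + Zw y i j - (b0inv y / (Ns : ℝ)) * (if i = j then 1 else 0)) ^ 2

/-- `b₃ = X_{iijj}`. -/
def b3inv {Ns Nf : ℕ} (y : Fin Ns → Matrix (Fin Nf) (Fin Nf) ℂ) : ℝ :=
  ∑ i, ∑ j, Xw y i i j j

/-- `Y = Tr(y_i ȳ_i y_j ȳ_j) = ‖y_i ȳ_i‖²`. -/
def Yinv {Ns Nf : ℕ} (y : Fin Ns → Matrix (Fin Nf) (Fin Nf) ℂ) : ℝ :=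
  (∑ i, ∑ j, Matrix.trace (y i * mconj (y i) * (y j * mconj (y j)))).re

/-- `b̃₀ = a₀ b₀ / Ns`. -/
def btilde0 {Ns Nf : ℕ} (lam : Fin Ns → Fin Ns → Fin Ns → Fin Ns → ℝ)
    (y : Fin Ns → Matrix (Fin Nf) (Fin Nf) ℂ) : ℝ :=
  a0inv lam * b0inv y / (Ns : ℝ)

/-- The `A`-function `A_y(λ)` generating the one-loop quartic beta function. -/
def Afun {Ns Nf : ℕ} (ε : ℝ) (lam : Fin Ns → Fin Ns → Fin Ns → Fin Ns → ℝ)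
    (y : Fin Ns → Matrix (Fin Nf) (Fin Nf) ℂ) : ℝ :=
  -(1 / 2) * ε * (∑ i, ∑ j, ∑ k, ∑ l, lam i j k l * lam i j k l)
    + (∑ i, ∑ j, ∑ k, ∑ l, ∑ m, ∑ n, lam i j k l * lam k l m n * lam m n i j)
    - 4 * (∑ i, ∑ j, ∑ k, ∑ l, Xw y i j k l * lam i j k l)
    + (∑ i, ∑ j, ∑ k, ∑ l, ∑ m, Zw y i j * lam i k l m * lam j k l m)

section MichelMain

private lemma Zw_symm {Ns Nf : ℕ} (y : Fin Ns → Matrix (Fin Nf) (Fin Nf) ℂ) :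
    ∀ i j, Zw y i j = Zw y j i := by
  intro i j
  simp only [Zw, Matrix.trace_add]
  rw [Matrix.trace_mul_comm (y i) (mconj (y j)), Matrix.trace_mul_comm (mconj (y i)) (y j)]
  rw [add_comm]

private lemma hpt2x {Ns Nf : ℕ} (ε : ℝ) (y : Fin Ns → Matrix (Fin Nf) (Fin Nf) ℂ)
    (P Q : Fin Ns → Fin Ns → Fin Ns → Fin Ns → ℝ) :
    ∀ i j k l, Q i j k l * betaLamW ε P y i j k l =
      -(ε * (Q i j k l * P i j k l))
      + (∑ m, ∑ n, (Q i j k l * (P i j m n * P m n k l) + Q i j k l * (P i k m n * P m n j l)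
          + Q i j k l * (P i l m n * P m n j k)))
      - 4 * (Xw y i j k l * Q i j k l)
      + (∑ m, ((1/2) * (Zw y i m * (Q i j k l * P m j k l))
          + (1/2) * (Zw y j m * (Q i j k l * P i m k l))
          + (1/2) * (Zw y k m * (Q i j k l * P i j m l))
          + (1/2) * (Zw y l m * (Q i j k l * P i j k m)))) := by
  intro i j k l
  simp only [betaLamW, mul_add, mul_sub, Finset.mul_sum]
  ring_nf

private lemma contract_beta {Ns Nf : ℕ} (ε : ℝ) (y : Fin Ns → Matrix (Fin Nf) (Fin Nf) ℂ)
    (P Q : Fin Ns → Fin Ns → Fin Ns → Fin Ns → ℝ)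
    (hP : FullySymm P) (hQ : FullySymm Q) :
    -(1/2)*ε*(S2x P Q + S2x Q P) + (T3x Q P P + T3x P Q P + T3x P P Q)
      - 4 * XTx (Xw y) Q + (ZTx (Zw y) P Q + ZTx (Zw y) Q P)
    = ∑ i, ∑ j, ∑ k, ∑ l, Q i j k l * betaLamW ε P y i j k l := by
  have hp12 : ∀ i j k l, P i j k l = P j i k l := fun i j k l => (hP i j k l).1
  have hp23 : ∀ i j k l, P i j k l = P i k j l := fun i j k l => (hP i j k l).2.1
  have hp34 : ∀ i j k l, P i j k l = P i j l k := fun i j k l => (hP i j k l).2.2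
  have hq12 : ∀ i j k l, Q i j k l = Q j i k l := fun i j k l => (hQ i j k l).1
  have hq23 : ∀ i j k l, Q i j k l = Q i k j l := fun i j k l => (hQ i j k l).2.1
  have hq34 : ∀ i j k l, Q i j k l = Q i j l k := fun i j k l => (hQ i j k l).2.2
  have hN : (∑ i, ∑ j, ∑ k, ∑ l, -(ε * (Q i j k l * P i j k l))) = -(ε * S2x Q P) := by
    simp [S2x, Finset.mul_sum]
  have hXp : (∑ i, ∑ j, ∑ k, ∑ l, 4 * (Xw y i j k l * Q i j k l)) = 4 * XTx (Xw y) Q := by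
    simp [XTx, Finset.mul_sum]
  have hZ1 : (∑ i, ∑ j, ∑ k, ∑ l, ∑ m, (1/2) * (Zw y i m * (Q i j k l * P m j k l)))
      = (1/2) * ZTx (Zw y) Q P := by
    rw [← B1x P Q (Zw y)]; simp [Finset.mul_sum]
  have hZ2 : (∑ i, ∑ j, ∑ k, ∑ l, ∑ m, (1/2) * (Zw y j m * (Q i j k l * P i m k l)))
      = (1/2) * ZTx (Zw y) Q P := by
    rw [← B2x P Q hq12 hp12 (Zw y)]; simp [Finset.mul_sum]
  have hZ3 : (∑ i, ∑ j, ∑ k, ∑ l, ∑ m, (1/2) * (Zw y k m * (Q i j k l * P i j m l)))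
      = (1/2) * ZTx (Zw y) Q P := by
    rw [← B3x P Q hq12 hq23 hp12 hp23 (Zw y)]; simp [Finset.mul_sum]
  have hZ4 : (∑ i, ∑ j, ∑ k, ∑ l, ∑ m, (1/2) * (Zw y l m * (Q i j k l * P i j k m)))
      = (1/2) * ZTx (Zw y) Q P := by
    rw [← B4x P Q hq12 hq23 hq34 hp12 hp23 hp34 (Zw y)]; simp [Finset.mul_sum]
  rw [csum4 (hpt2x ε y P Q)]
  simp only [Finset.sum_add_distrib, Finset.sum_sub_distrib]
  rw [hN, hXp, hZ1, hZ2, hZ3, hZ4, A1x P Q hq12 hq23 hq34, A2x P Q hq12 hq23 hq34,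
    A3x P Q hq12 hq23 hq34]
  rw [S2sym P Q, show T3x P Q P = T3x Q P P from (T3cyc P Q P).trans (T3cyc P P Q),
    show T3x P P Q = T3x Q P P from T3cyc P P Q, ZTsym (Zw y) (Zw_symm y) P Q]
  ring

private lemma expandA {Ns Nf : ℕ} (ε : ℝ) (y : Fin Ns → Matrix (Fin Nf) (Fin Nf) ℂ)
    (P Q : Fin Ns → Fin Ns → Fin Ns → Fin Ns → ℝ) (t : ℝ) :
    Afun ε (fun i j k l => P i j k l + t * Q i j k l) y
    = (-(1/2)*ε*S2x P P + T3x P P P - 4*XTx (Xw y) P + ZTx (Zw y) P P)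
      + (-(1/2)*ε*(S2x P Q + S2x Q P) + (T3x Q P P + T3x P Q P + T3x P P Q)
          - 4*XTx (Xw y) Q + (ZTx (Zw y) P Q + ZTx (Zw y) Q P)) * t
      + (-(1/2)*ε*S2x Q Q + (T3x P Q Q + T3x Q P Q + T3x Q Q P) + ZTx (Zw y) Q Q) * t^2
      + T3x Q Q Q * t^3 := by
  have e : Afun ε (fun i j k l => P i j k l + t * Q i j k l) y
      = -(1 / 2) * ε * (∑ i, ∑ j, ∑ k, ∑ l,
            (P i j k l + t * Q i j k l) * (P i j k l + t * Q i j k l))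
        + (∑ i, ∑ j, ∑ k, ∑ l, ∑ m, ∑ n,
            (P i j k l + t * Q i j k l) * (P k l m n + t * Q k l m n)
              * (P m n i j + t * Q m n i j))
        - 4 * (∑ i, ∑ j, ∑ k, ∑ l, Xw y i j k l * (P i j k l + t * Q i j k l))
        + (∑ i, ∑ j, ∑ k, ∑ l, ∑ m,
            Zw y i j * (P i k l m + t * Q i k l m) * (P j k l m + t * Q j k l m)) := rfl
  rw [e, term1x, term2x, term3x, term4x]
  ring

end MichelMain
/-- Generalised Michel theorem at one loop: at a fixed Yukawa level, a quartic fixed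
point with the larger value of the `A`-function is not stable: the second variation of
`A_y` at `λ₁` in the direction `μ = λ₁ − λ₂` is strictly negative. -/
theorem michel_uniqueness_of_stable_fixed_point {Ns Nf : ℕ} (hNs : 1 ≤ Ns) (hNf : 1 ≤ Nf)
    (ε : ℝ) (y : Fin Ns → Matrix (Fin Nf) (Fin Nf) ℂ) (hy : ∀ i, (y i)ᵀ = y i)
    (lam1 lam2 : Fin Ns → Fin Ns → Fin Ns → Fin Ns → ℝ)
    (h1sym : FullySymm lam1) (h2sym : FullySymm lam2)
    (h1 : ∀ i j k l, betaLamW ε lam1 y i j k l = 0)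
    (h2 : ∀ i j k l, betaLamW ε lam2 y i j k l = 0)
    (hne : lam1 ≠ lam2)
    (hA : Afun ε lam2 y < Afun ε lam1 y) :
    iteratedDeriv 2 (fun t : ℝ =>
      Afun ε (fun i j k l => lam1 i j k l + t * (lam1 i j k l - lam2 i j k l)) y) 0 < 0 := by
  have hQsym : FullySymm (fun i j k l => lam1 i j k l - lam2 i j k l) := by
    intro i j k l
    refine ⟨?_, ?_, ?_⟩
    · show lam1 i j k l - lam2 i j k l = lam1 j i k l - lam2 j i k l
      rw [(h1sym i j k l).1, (h2sym i j k l).1]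
    · show lam1 i j k l - lam2 i j k l = lam1 i k j l - lam2 i k j l
      rw [(h1sym i j k l).2.1, (h2sym i j k l).2.1]
    · show lam1 i j k l - lam2 i j k l = lam1 i j l k - lam2 i j l k
      rw [(h1sym i j k l).2.2, (h2sym i j k l).2.2]
  have hfun : (fun t : ℝ => Afun ε
      (fun i j k l => lam1 i j k l + t * (lam1 i j k l - lam2 i j k l)) y)
      = fun t : ℝ => (-(1/2)*ε*S2x lam1 lam1 + T3x lam1 lam1 lam1 - 4*XTx (Xw y) lam1 + ZTx (Zw y) lam1 lam1)
        + (-(1/2)*ε*(S2x lam1 (fun i j k l => lam1 i j k l - lam2 i j k l) + S2x (fun i j k l => lam1 i j k l - lam2 i j k l) lam1) + (T3x (fun i j k l => lam1 i j k l - lam2 i j k l) lam1 lam1 + T3x lam1 (fun i j k l => lam1 i j k l - lam2 i j k l) lam1 + T3x lam1 lam1 (fun i j k l => lam1 i j k l - lam2 i j k l)) - 4 * XTx (Xw y) (fun i j k l => lam1 i j k l - lam2 i j k l) + (ZTx (Zw y) lam1 (fun i j k l => lam1 i j k l - lam2 i j k l) + ZTx (Zw y) (fun i j k l => lam1 i j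 k l - lam2 i j k l) lam1)) * t
        + (-(1/2)*ε*S2x (fun i j k l => lam1 i j k l - lam2 i j k l) (fun i j k l => lam1 i j k l - lam2 i j k l) + (T3x lam1 (fun i j k l => lam1 i j k l - lam2 i j k l) (fun i j k l => lam1 i j k l - lam2 i j k l) + T3x (fun i j k l => lam1 i j k l - lam2 i j k l) lam1 (fun i j k l => lam1 i j k l - lam2 i j k l) + T3x (fun i j k l => lam1 i j k l - lam2 i j k l) (fun i j k l => lam1 i j k l - lam2 i j k l) lam1) + ZTx (Zw y) (fun i j k l => lam1 i j k l - lam2 i j k l) (fun i j k l => lam1 i j k l - lam2 i j k l)) * t ^ 2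
        + T3x (fun i j k l => lam1 i j k l - lam2 i j k l) (fun i j k l => lam1 i j k l - lam2 i j k l) (fun i j k l => lam1 i j k l - lam2 i j k l) * t ^ 3 := by
    funext t
    exact expandA ε y lam1 (fun i j k l => lam1 i j k l - lam2 i j k l) t
  have hpoly : ∀ t : ℝ, (-(1/2)*ε*S2x lam1 lam1 + T3x lam1 lam1 lam1 - 4*XTx (Xw y) lam1 + ZTx (Zw y) lam1 lam1)
        + (-(1/2)*ε*(S2x lam1 (fun i j k l => lam1 i j k l - lam2 i j k l) + S2x (fun i j k l => lam1 i j k l - lam2 i j k l) lam1) + (T3x (fun i j k l => lam1 i j k l - lam2 i j k l) lam1 lam1 + T3x lam1 (fun i j k l => lam1 i j k l - lam2 i j k l) lam1 + T3x lam1 lam1 (fun i j k l => lam1 i j k l - lam2 i j k l)) - 4 * XTx (Xw y) (fun i j k l => lam1 i j k l - lam2 i j k l) + (ZTx (Zw y) lam1 (fun i j k l => lam1 i j k l - lam2 i j k l) + ZTx (Zw y) (fun i j k l => lam1 i j k l - lam2 i j k l) lam1)) * t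
        + (-(1/2)*ε*S2x (fun i j k l => lam1 i j k l - lam2 i j k l) (fun i j k l => lam1 i j k l - lam2 i j k l) + (T3x lam1 (fun i j k l => lam1 i j k l - lam2 i j k l) (fun i j k l => lam1 i j k l - lam2 i j k l) + T3x (fun i j k l => lam1 i j k l - lam2 i j k l) lam1 (fun i j k l => lam1 i j k l - lam2 i j k l) + T3x (fun i j k l => lam1 i j k l - lam2 i j k l) (fun i j k l => lam1 i j k l - lam2 i j k l) lam1) + ZTx (Zw y) (fun i j k l => lam1 i j k l - lam2 i j k l) (fun i j k l => lam1 i j k l - lam2 i j k l)) * t ^ 2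
        + T3x (fun i j k l => lam1 i j k l - lam2 i j k l) (fun i j k l => lam1 i j k l - lam2 i j k l) (fun i j k l => lam1 i j k l - lam2 i j k l) * t ^ 3
      = (-(1/2)*ε*S2x lam2 lam2 + T3x lam2 lam2 lam2 - 4*XTx (Xw y) lam2 + ZTx (Zw y) lam2 lam2)
        + (-(1/2)*ε*(S2x lam2 (fun i j k l => lam1 i j k l - lam2 i j k l) + S2x (fun i j k l => lam1 i j k l - lam2 i j k l) lam2) + (T3x (fun i j k l => lam1 i j k l - lam2 i j k l) lam2 lam2 + T3x lam2 (fun i j k l => lam1 i j k l - lam2 i j k l) lam2 + T3x lam2 lam2 (fun i j k l => lam1 i j k l - lam2 i j k l)) - 4 * XTx (Xw y) (fun i j k l => lam1 i j k l - lam2 i j k l) + (ZTx (Zw y) lam2 (fun i j k l => lam1 i j k l - lam2 i j k l) + ZTx (Zw y) (fun i j k l => lam1 i j k l - lam2 i j k l) lam2)) * (t + 1)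
        + (-(1/2)*ε*S2x (fun i j k l => lam1 i j k l - lam2 i j k l) (fun i j k l => lam1 i j k l - lam2 i j k l) + (T3x lam2 (fun i j k l => lam1 i j k l - lam2 i j k l) (fun i j k l => lam1 i j k l - lam2 i j k l) + T3x (fun i j k l => lam1 i j k l - lam2 i j k l) lam2 (fun i j k l => lam1 i j k l - lam2 i j k l) + T3x (fun i j k l => lam1 i j k l - lam2 i j k l) (fun i j k l => lam1 i j k l - lam2 i j k l) lam2) + ZTx (Zw y) (fun i j k l => lam1 i j k l - lam2 i j k l) (fun i j k l => lam1 i j k l - lam2 i j k l)) * (t + 1) ^ 2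
        + T3x (fun i j k l => lam1 i j k l - lam2 i j k l) (fun i j k l => lam1 i j k l - lam2 i j k l) (fun i j k l => lam1 i j k l - lam2 i j k l) * (t + 1) ^ 3 := by
    intro t
    have e3 : (fun i j k l => lam1 i j k l + t * (fun i j k l => lam1 i j k l - lam2 i j k l) i j k l)
        = (fun i j k l => lam2 i j k l + (t + 1) * (fun i j k l => lam1 i j k l - lam2 i j k l) i j k l) := by
      funext i j k l
      show lam1 i j k l + t * (lam1 i j k l - lam2 i j k l)
        = lam2 i j k l + (t + 1) * (lam1 i j k l - lam2 i j k l)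
      ring
    calc (-(1/2)*ε*S2x lam1 lam1 + T3x lam1 lam1 lam1 - 4*XTx (Xw y) lam1 + ZTx (Zw y) lam1 lam1)
        + (-(1/2)*ε*(S2x lam1 (fun i j k l => lam1 i j k l - lam2 i j k l) + S2x (fun i j k l => lam1 i j k l - lam2 i j k l) lam1) + (T3x (fun i j k l => lam1 i j k l - lam2 i j k l) lam1 lam1 + T3x lam1 (fun i j k l => lam1 i j k l - lam2 i j k l) lam1 + T3x lam1 lam1 (fun i j k l => lam1 i j k l - lam2 i j k l)) - 4 * XTx (Xw y) (fun i j k l => lam1 i j k l - lam2 i j k l) + (ZTx (Zw y) lam1 (fun i j k l => lam1 i j k l - lam2 i j k l) + ZTx (Zw y) (fun i j k l => lam1 i j k l - lam2 i j k l) lam1)) * t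
        + (-(1/2)*ε*S2x (fun i j k l => lam1 i j k l - lam2 i j k l) (fun i j k l => lam1 i j k l - lam2 i j k l) + (T3x lam1 (fun i j k l => lam1 i j k l - lam2 i j k l) (fun i j k l => lam1 i j k l - lam2 i j k l) + T3x (fun i j k l => lam1 i j k l - lam2 i j k l) lam1 (fun i j k l => lam1 i j k l - lam2 i j k l) + T3x (fun i j k l => lam1 i j k l - lam2 i j k l) (fun i j k l => lam1 i j k l - lam2 i j k l) lam1) + ZTx (Zw y) (fun i j k l => lam1 i j k l - lam2 i j k l) (fun i j k l => lam1 i j k l - lam2 i j k l)) * t ^ 2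
        + T3x (fun i j k l => lam1 i j k l - lam2 i j k l) (fun i j k l => lam1 i j k l - lam2 i j k l) (fun i j k l => lam1 i j k l - lam2 i j k l) * t ^ 3
        = Afun ε (fun i j k l => lam1 i j k l + t * (fun i j k l => lam1 i j k l - lam2 i j k l) i j k l) y :=
          (expandA ε y lam1 (fun i j k l => lam1 i j k l - lam2 i j k l) t).symm
      _ = Afun ε (fun i j k l => lam2 i j k l + (t + 1) * (fun i j k l => lam1 i j k l - lam2 i j k l) i j k l) y := by rw [e3]
      _ = (-(1/2)*ε*S2x lam2 lam2 + T3x lam2 lam2 lam2 - 4*XTx (Xw y) lam2 + ZTx (Zw y) lam2 lam2)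
        + (-(1/2)*ε*(S2x lam2 (fun i j k l => lam1 i j k l - lam2 i j k l) + S2x (fun i j k l => lam1 i j k l - lam2 i j k l) lam2) + (T3x (fun i j k l => lam1 i j k l - lam2 i j k l) lam2 lam2 + T3x lam2 (fun i j k l => lam1 i j k l - lam2 i j k l) lam2 + T3x lam2 lam2 (fun i j k l => lam1 i j k l - lam2 i j k l)) - 4 * XTx (Xw y) (fun i j k l => lam1 i j k l - lam2 i j k l) + (ZTx (Zw y) lam2 (fun i j k l => lam1 i j k l - lam2 i j k l) + ZTx (Zw y) (fun i j k l => lam1 i j k l - lam2 i j k l) lam2)) * (t + 1)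
        + (-(1/2)*ε*S2x (fun i j k l => lam1 i j k l - lam2 i j k l) (fun i j k l => lam1 i j k l - lam2 i j k l) + (T3x lam2 (fun i j k l => lam1 i j k l - lam2 i j k l) (fun i j k l => lam1 i j k l - lam2 i j k l) + T3x (fun i j k l => lam1 i j k l - lam2 i j k l) lam2 (fun i j k l => lam1 i j k l - lam2 i j k l) + T3x (fun i j k l => lam1 i j k l - lam2 i j k l) (fun i j k l => lam1 i j k l - lam2 i j k l) lam2) + ZTx (Zw y) (fun i j k l => lam1 i j k l - lam2 i j k l) (fun i j k l => lam1 i j k l - lam2 i j k l)) * (t + 1) ^ 2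
        + T3x (fun i j k l => lam1 i j k l - lam2 i j k l) (fun i j k l => lam1 i j k l - lam2 i j k l) (fun i j k l => lam1 i j k l - lam2 i j k l) * (t + 1) ^ 3 := expandA ε y lam2 (fun i j k l => lam1 i j k l - lam2 i j k l) (t + 1)
  have hC1a : (-(1/2)*ε*(S2x lam1 (fun i j k l => lam1 i j k l - lam2 i j k l) + S2x (fun i j k l => lam1 i j k l - lam2 i j k l) lam1) + (T3x (fun i j k l => lam1 i j k l - lam2 i j k l) lam1 lam1 + T3x lam1 (fun i j k l => lam1 i j k l - lam2 i j k l) lam1 + T3x lam1 lam1 (fun i j k l => lam1 i j k l - lam2 i j k l)) - 4 * XTx (Xw y) (fun i j k l => lam1 i j k l - lam2 i j k l) + (ZTx (Zw y) lam1 (fun i j k l => lam1 i j k l - lam2 i j k l) + ZTx (Zw y) (fun i j k l => lam1 i j k l - lam2 i j k l) lam1)) = 0 := by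
    rw [contract_beta ε y lam1 (fun i j k l => lam1 i j k l - lam2 i j k l) h1sym hQsym]
    simp [h1]
  have hC1b : (-(1/2)*ε*(S2x lam2 (fun i j k l => lam1 i j k l - lam2 i j k l) + S2x (fun i j k l => lam1 i j k l - lam2 i j k l) lam2) + (T3x (fun i j k l => lam1 i j k l - lam2 i j k l) lam2 lam2 + T3x lam2 (fun i j k l => lam1 i j k l - lam2 i j k l) lam2 + T3x lam2 lam2 (fun i j k l => lam1 i j k l - lam2 i j k l)) - 4 * XTx (Xw y) (fun i j k l => lam1 i j k l - lam2 i j k l) + (ZTx (Zw y) lam2 (fun i j k l => lam1 i j k l - lam2 i j k l) + ZTx (Zw y) (fun i j k l => lam1 i j k l - lam2 i j k l) lam2)) = 0 := by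
    rw [contract_beta ε y lam2 (fun i j k l => lam1 i j k l - lam2 i j k l) h2sym hQsym]
    simp [h2]
  have hA1 : Afun ε lam1 y = (-(1/2)*ε*S2x lam1 lam1 + T3x lam1 lam1 lam1 - 4*XTx (Xw y) lam1 + ZTx (Zw y) lam1 lam1) := rfl
  have hA2 : Afun ε lam2 y = (-(1/2)*ε*S2x lam2 lam2 + T3x lam2 lam2 lam2 - 4*XTx (Xw y) lam2 + ZTx (Zw y) lam2 lam2) := rfl
  rw [hA1, hA2] at hA
  have e0 := hpoly 0
  have e1 := hpoly 1
  have em1 := hpoly (-1)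
  norm_num at e0 e1 em1
  rw [hfun, itd2x]
  linarith
end
end

section
/- Second-variation identity between two fixed points at the same Yukawa level: fix the Yukawa couplings y, and let λ₁ and λ₂ be fully symmetric real tensors satisfying β^λ(λ₁, y) = 0 and β^λ(λ₂, y) = 0. Then for the direction μ = λ₁ − λ₂, the second derivative (d²/dt²) A_y(λ₁ + t μ) evaluated at t = 0 equals 6 (A_y(λ₂) − A_y(λ₁)). -/
open Matrix

noncomputable section

----------------------------------------------------------------------
-- auxiliary machinery
----------------------------------------------------------------------

namespace SVAux

variable {Ns Nf : ℕ}

abbrev Tens (Ns : ℕ) := Fin Ns → Fin Ns → Fin Ns → Fin Ns → ℝ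

/-- `S2 a b = a_{ijkl} b_{ijkl}` -/
def S2 (a b : Tens Ns) : ℝ :=
  ∑ i, ∑ j, ∑ k, ∑ l, a i j k l * b i j k l

/-- `T3 a b c = a_{ijkl} b_{klmn} c_{mnij}` -/
def T3 (a b c : Tens Ns) : ℝ :=
  ∑ i, ∑ j, ∑ k, ∑ l, ∑ m, ∑ n, a i j k l * b k l m n * c m n i j

/-- `XL y a = X_{ijkl} a_{ijkl}` -/
def XL (y : Fin Ns → Matrix (Fin Nf) (Fin Nf) ℂ) (a : Tens Ns) : ℝ :=
  ∑ i, ∑ j, ∑ k, ∑ l, Xw y i j k l * a i j k l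

/-- `ZQ y a b = Z_{ij} a_{iklm} b_{jklm}` -/
def ZQ (y : Fin Ns → Matrix (Fin Nf) (Fin Nf) ℂ) (a b : Tens Ns) : ℝ :=
  ∑ i, ∑ j, ∑ k, ∑ l, ∑ m, Zw y i j * a i k l m * b j k l m

lemma Afun_eq (ε : ℝ) (y : Fin Ns → Matrix (Fin Nf) (Fin Nf) ℂ) (lam : Tens Ns) :
    Afun ε lam y = -(1 / 2) * ε * S2 lam lam + T3 lam lam lam - 4 * XL y lam
      + ZQ y lam lam := rfl

-- collapse lemmas
lemma c4 (F : Fin Ns → Fin Ns → Fin Ns → Fin Ns → ℝ) :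
    (∑ p : Fin Ns × Fin Ns × Fin Ns × Fin Ns, F p.1 p.2.1 p.2.2.1 p.2.2.2)
      = ∑ i, ∑ j, ∑ k, ∑ l, F i j k l := by
  simp [Fintype.sum_prod_type]

lemma c5 (F : Fin Ns → Fin Ns → Fin Ns → Fin Ns → Fin Ns → ℝ) :
    (∑ p : Fin Ns × Fin Ns × Fin Ns × Fin Ns × Fin Ns,
        F p.1 p.2.1 p.2.2.1 p.2.2.2.1 p.2.2.2.2)
      = ∑ i, ∑ j, ∑ k, ∑ l, ∑ m, F i j k l m := by
  simp [Fintype.sum_prod_type]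

lemma c6 (F : Fin Ns → Fin Ns → Fin Ns → Fin Ns → Fin Ns → Fin Ns → ℝ) :
    (∑ p : Fin Ns × Fin Ns × Fin Ns × Fin Ns × Fin Ns × Fin Ns,
        F p.1 p.2.1 p.2.2.1 p.2.2.2.1 p.2.2.2.2.1 p.2.2.2.2.2)
      = ∑ i, ∑ j, ∑ k, ∑ l, ∑ m, ∑ n, F i j k l m n := by
  simp [Fintype.sum_prod_type]

-- symmetry helpers
variable {a : Tens Ns}

lemma fs1 (h : FullySymm a) (i j k l : Fin Ns) : a j i k l = a i j k l :=
  ((h i j k l).1).symm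

lemma fs2 (h : FullySymm a) (i j k l : Fin Ns) : a i k j l = a i j k l :=
  ((h i j k l).2.1).symm

lemma fs3 (h : FullySymm a) (i j k l : Fin Ns) : a i j l k = a i j k l :=
  ((h i j k l).2.2).symm

lemma fs_c3 (h : FullySymm a) (i j k l : Fin Ns) : a j k i l = a i j k l := by
  rw [fs2 h j i k l, fs1 h i j k l]

lemma fs_c3' (h : FullySymm a) (i j k l : Fin Ns) : a k i j l = a i j k l := by
  rw [fs_c3 h j k i l, fs_c3 h i j k l]

lemma fs_rot (h : FullySymm a) (i j k l : Fin Ns) : a j k l i = a i j k l := by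
  rw [fs3 h j k i l, fs_c3 h i j k l]

lemma fs_pair (h : FullySymm a) (i j k l : Fin Ns) : a k l i j = a i j k l := by
  rw [fs_rot h j k l i, fs_rot h i j k l]

lemma fs_rot' (h : FullySymm a) (i j k l : Fin Ns) : a l i j k = a i j k l := by
  rw [fs_rot h k l i j, fs_pair h i j k l]

lemma fs_P2 (h : FullySymm a) (i j k l : Fin Ns) : a j l i k = a i j k l := by
  rw [fs2 h j i l k, fs1 h i j l k, fs3 h i j k l]

lemma Zw_symm (y : Fin Ns → Matrix (Fin Nf) (Fin Nf) ℂ) (i j : Fin Ns) :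
    Zw y i j = Zw y j i := by
  simp only [Zw, Matrix.trace_add]
  rw [Matrix.trace_mul_comm (y i) (mconj (y j)), Matrix.trace_mul_comm (mconj (y i)) (y j)]
  rw [add_comm]

lemma S2_comm (a b : Tens Ns) : S2 a b = S2 b a := by
  unfold S2
  exact Finset.sum_congr rfl fun i _ => Finset.sum_congr rfl fun j _ =>
    Finset.sum_congr rfl fun k _ => Finset.sum_congr rfl fun l _ => by ring

lemma T3_cyc (a b c : Tens Ns) : T3 a b c = T3 c a b := by
  have h1 : T3 a b c = ∑ p : Fin Ns × Fin Ns × Fin Ns × Fin Ns × Fin Ns × Fin Ns,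
      a p.1 p.2.1 p.2.2.1 p.2.2.2.1 * b p.2.2.1 p.2.2.2.1 p.2.2.2.2.1 p.2.2.2.2.2
        * c p.2.2.2.2.1 p.2.2.2.2.2 p.1 p.2.1 := (c6 _).symm
  have h2 : T3 c a b = ∑ p : Fin Ns × Fin Ns × Fin Ns × Fin Ns × Fin Ns × Fin Ns,
      c p.1 p.2.1 p.2.2.1 p.2.2.2.1 * a p.2.2.1 p.2.2.2.1 p.2.2.2.2.1 p.2.2.2.2.2
        * b p.2.2.2.2.1 p.2.2.2.2.2 p.1 p.2.1 := (c6 _).symm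
  rw [h1, h2]
  exact Fintype.sum_equiv
    ⟨fun p => (p.2.2.2.2.1, p.2.2.2.2.2, p.1, p.2.1, p.2.2.1, p.2.2.2.1),
     fun p => (p.2.2.1, p.2.2.2.1, p.2.2.2.2.1, p.2.2.2.2.2, p.1, p.2.1),
     fun ⟨i,j,k,l,m,n⟩ => rfl, fun ⟨i,j,k,l,m,n⟩ => rfl⟩ _ _
    (fun ⟨i,j,k,l,m,n⟩ => by
      show a i j k l * b k l m n * c m n i j = c m n i j * a i j k l * b k l m n
      ring)

lemma ZQ_comm (y : Fin Ns → Matrix (Fin Nf) (Fin Nf) ℂ) (a b : Tens Ns) :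
    ZQ y a b = ZQ y b a := by
  have h1 : ZQ y a b = ∑ p : Fin Ns × Fin Ns × Fin Ns × Fin Ns × Fin Ns,
      Zw y p.1 p.2.1 * a p.1 p.2.2.1 p.2.2.2.1 p.2.2.2.2
        * b p.2.1 p.2.2.1 p.2.2.2.1 p.2.2.2.2 := (c5 _).symm
  have h2 : ZQ y b a = ∑ p : Fin Ns × Fin Ns × Fin Ns × Fin Ns × Fin Ns,
      Zw y p.1 p.2.1 * b p.1 p.2.2.1 p.2.2.2.1 p.2.2.2.2
        * a p.2.1 p.2.2.1 p.2.2.2.1 p.2.2.2.2 := (c5 _).symm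
  rw [h1, h2]
  exact Fintype.sum_equiv
    ⟨fun p => (p.2.1, p.1, p.2.2.1, p.2.2.2.1, p.2.2.2.2),
     fun p => (p.2.1, p.1, p.2.2.1, p.2.2.2.1, p.2.2.2.2),
     fun ⟨i,j,k,l,m⟩ => rfl, fun ⟨i,j,k,l,m⟩ => rfl⟩ _ _
    (fun ⟨i,j,k,l,m⟩ => by
      show Zw y i j * a i k l m * b j k l m = Zw y j i * b j k l m * a i k l m
      rw [Zw_symm y j i]; ring)

end SVAux

namespace SVAux

variable {Ns Nf : ℕ}

lemma S2_addl (a u c : Tens Ns) (t : ℝ) :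
    S2 (fun i j k l => a i j k l + t * u i j k l) c = S2 a c + t * S2 u c := by
  simp only [S2, Finset.mul_sum]
  simp only [← Finset.sum_add_distrib]
  exact Finset.sum_congr rfl fun i _ => Finset.sum_congr rfl fun j _ =>
    Finset.sum_congr rfl fun k _ => Finset.sum_congr rfl fun l _ => by ring

lemma S2_addr (a u c : Tens Ns) (t : ℝ) :
    S2 c (fun i j k l => a i j k l + t * u i j k l) = S2 c a + t * S2 c u := by
  simp only [S2, Finset.mul_sum]
  simp only [← Finset.sum_add_distrib]
  exact Finset.sum_congr rfl fun i _ => Finset.sum_congr rfl fun j _ =>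
    Finset.sum_congr rfl fun k _ => Finset.sum_congr rfl fun l _ => by ring

lemma T3_addl (a u b c : Tens Ns) (t : ℝ) :
    T3 (fun i j k l => a i j k l + t * u i j k l) b c = T3 a b c + t * T3 u b c := by
  simp only [T3, Finset.mul_sum]
  simp only [← Finset.sum_add_distrib]
  exact Finset.sum_congr rfl fun i _ => Finset.sum_congr rfl fun j _ =>
    Finset.sum_congr rfl fun k _ => Finset.sum_congr rfl fun l _ =>
    Finset.sum_congr rfl fun m _ => Finset.sum_congr rfl fun n _ => by ring

lemma T3_addm (a u b c : Tens Ns) (t : ℝ) :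
    T3 b (fun i j k l => a i j k l + t * u i j k l) c = T3 b a c + t * T3 b u c := by
  simp only [T3, Finset.mul_sum]
  simp only [← Finset.sum_add_distrib]
  exact Finset.sum_congr rfl fun i _ => Finset.sum_congr rfl fun j _ =>
    Finset.sum_congr rfl fun k _ => Finset.sum_congr rfl fun l _ =>
    Finset.sum_congr rfl fun m _ => Finset.sum_congr rfl fun n _ => by ring

lemma T3_addr (a u b c : Tens Ns) (t : ℝ) :
    T3 b c (fun i j k l => a i j k l + t * u i j k l) = T3 b c a + t * T3 b c u := by
  simp only [T3, Finset.mul_sum]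
  simp only [← Finset.sum_add_distrib]
  exact Finset.sum_congr rfl fun i _ => Finset.sum_congr rfl fun j _ =>
    Finset.sum_congr rfl fun k _ => Finset.sum_congr rfl fun l _ =>
    Finset.sum_congr rfl fun m _ => Finset.sum_congr rfl fun n _ => by ring

lemma XL_add (y : Fin Ns → Matrix (Fin Nf) (Fin Nf) ℂ) (a u : Tens Ns) (t : ℝ) :
    XL y (fun i j k l => a i j k l + t * u i j k l) = XL y a + t * XL y u := by
  simp only [XL, Finset.mul_sum]
  simp only [← Finset.sum_add_distrib]
  exact Finset.sum_congr rfl fun i _ => Finset.sum_congr rfl fun j _ =>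
    Finset.sum_congr rfl fun k _ => Finset.sum_congr rfl fun l _ => by ring

lemma ZQ_addl (y : Fin Ns → Matrix (Fin Nf) (Fin Nf) ℂ) (a u c : Tens Ns) (t : ℝ) :
    ZQ y (fun i j k l => a i j k l + t * u i j k l) c = ZQ y a c + t * ZQ y u c := by
  simp only [ZQ, Finset.mul_sum]
  simp only [← Finset.sum_add_distrib]
  exact Finset.sum_congr rfl fun i _ => Finset.sum_congr rfl fun j _ =>
    Finset.sum_congr rfl fun k _ => Finset.sum_congr rfl fun l _ =>
    Finset.sum_congr rfl fun m _ => by ring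

lemma ZQ_addr (y : Fin Ns → Matrix (Fin Nf) (Fin Nf) ℂ) (a u c : Tens Ns) (t : ℝ) :
    ZQ y c (fun i j k l => a i j k l + t * u i j k l) = ZQ y c a + t * ZQ y c u := by
  simp only [ZQ, Finset.mul_sum]
  simp only [← Finset.sum_add_distrib]
  exact Finset.sum_congr rfl fun i _ => Finset.sum_congr rfl fun j _ =>
    Finset.sum_congr rfl fun k _ => Finset.sum_congr rfl fun l _ =>
    Finset.sum_congr rfl fun m _ => by ring

lemma Afun_expand (y : Fin Ns → Matrix (Fin Nf) (Fin Nf) ℂ) (ε : ℝ) (l u : Tens Ns) (t : ℝ) :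
    Afun ε (fun i j k l' => l i j k l' + t * u i j k l') y
      = Afun ε l y
        + t * (-(1 / 2) * ε * (S2 l u + S2 u l) + (T3 u l l + T3 l u l + T3 l l u)
            - 4 * XL y u + (ZQ y l u + ZQ y u l))
        + t ^ 2 * (-(1 / 2) * ε * S2 u u + (T3 l u u + T3 u l u + T3 u u l) + ZQ y u u)
        + t ^ 3 * T3 u u u := by
  rw [Afun_eq, Afun_eq]
  simp only [S2_addl, S2_addr, T3_addl, T3_addm, T3_addr, XL_add, ZQ_addl, ZQ_addr]
  ring

end SVAux

namespace SVAux

variable {Ns Nf : ℕ}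

lemma pieceS (ε : ℝ) (lam mu : Tens Ns) :
    (∑ i, ∑ j, ∑ k, ∑ l, -ε * (lam i j k l * mu i j k l)) = -ε * S2 lam mu := by
  simp only [S2, Finset.mul_sum]

lemma pieceX (y : Fin Ns → Matrix (Fin Nf) (Fin Nf) ℂ) (mu : Tens Ns) :
    (∑ i, ∑ j, ∑ k, ∑ l, 4 * (Xw y i j k l * mu i j k l)) = 4 * XL y mu := by
  simp only [XL, Finset.mul_sum]

lemma pieceP1 (lam mu : Tens Ns) (hm : FullySymm mu) :
    (∑ i, ∑ j, ∑ k, ∑ l, ∑ m, ∑ n, mu i j k l * (lam i j m n * lam m n k l))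
      = T3 mu lam lam := by
  have h1 : (∑ i, ∑ j, ∑ k, ∑ l, ∑ m, ∑ n, mu i j k l * (lam i j m n * lam m n k l))
      = ∑ p : Fin Ns × Fin Ns × Fin Ns × Fin Ns × Fin Ns × Fin Ns,
        mu p.1 p.2.1 p.2.2.1 p.2.2.2.1 * (lam p.1 p.2.1 p.2.2.2.2.1 p.2.2.2.2.2
          * lam p.2.2.2.2.1 p.2.2.2.2.2 p.2.2.1 p.2.2.2.1) := (c6 _).symm
  have h2 : T3 mu lam lam = ∑ p : Fin Ns × Fin Ns × Fin Ns × Fin Ns × Fin Ns × Fin Ns,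
      mu p.1 p.2.1 p.2.2.1 p.2.2.2.1 * lam p.2.2.1 p.2.2.2.1 p.2.2.2.2.1 p.2.2.2.2.2
        * lam p.2.2.2.2.1 p.2.2.2.2.2 p.1 p.2.1 := (c6 _).symm
  rw [h1, h2]
  exact Fintype.sum_equiv
    ⟨fun p => (p.2.2.1, p.2.2.2.1, p.1, p.2.1, p.2.2.2.2.1, p.2.2.2.2.2),
     fun p => (p.2.2.1, p.2.2.2.1, p.1, p.2.1, p.2.2.2.2.1, p.2.2.2.2.2),
     fun ⟨i,j,k,l,m,n⟩ => rfl, fun ⟨i,j,k,l,m,n⟩ => rfl⟩ _ _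
    (fun ⟨i,j,k,l,m,n⟩ => by
      show mu i j k l * (lam i j m n * lam m n k l)
        = mu k l i j * lam i j m n * lam m n k l
      rw [fs_pair hm i j k l]; ring)

lemma pieceP2 (lam mu : Tens Ns) (hm : FullySymm mu) :
    (∑ i, ∑ j, ∑ k, ∑ l, ∑ m, ∑ n, mu i j k l * (lam i k m n * lam m n j l))
      = T3 mu lam lam := by
  have h1 : (∑ i, ∑ j, ∑ k, ∑ l, ∑ m, ∑ n, mu i j k l * (lam i k m n * lam m n j l))
      = ∑ p : Fin Ns × Fin Ns × Fin Ns × Fin Ns × Fin Ns × Fin Ns,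
        mu p.1 p.2.1 p.2.2.1 p.2.2.2.1 * (lam p.1 p.2.2.1 p.2.2.2.2.1 p.2.2.2.2.2
          * lam p.2.2.2.2.1 p.2.2.2.2.2 p.2.1 p.2.2.2.1) := (c6 _).symm
  have h2 : T3 mu lam lam = ∑ p : Fin Ns × Fin Ns × Fin Ns × Fin Ns × Fin Ns × Fin Ns,
      mu p.1 p.2.1 p.2.2.1 p.2.2.2.1 * lam p.2.2.1 p.2.2.2.1 p.2.2.2.2.1 p.2.2.2.2.2
        * lam p.2.2.2.2.1 p.2.2.2.2.2 p.1 p.2.1 := (c6 _).symm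
  rw [h1, h2]
  exact Fintype.sum_equiv
    ⟨fun p => (p.2.1, p.2.2.2.1, p.1, p.2.2.1, p.2.2.2.2.1, p.2.2.2.2.2),
     fun p => (p.2.2.1, p.1, p.2.2.2.1, p.2.1, p.2.2.2.2.1, p.2.2.2.2.2),
     fun ⟨i,j,k,l,m,n⟩ => rfl, fun ⟨i,j,k,l,m,n⟩ => rfl⟩ _ _
    (fun ⟨i,j,k,l,m,n⟩ => by
      show mu i j k l * (lam i k m n * lam m n j l)
        = mu j l i k * lam i k m n * lam m n j l
      rw [fs_P2 hm i j k l]; ring)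

lemma pieceP3 (lam mu : Tens Ns) (hm : FullySymm mu) :
    (∑ i, ∑ j, ∑ k, ∑ l, ∑ m, ∑ n, mu i j k l * (lam i l m n * lam m n j k))
      = T3 mu lam lam := by
  have h1 : (∑ i, ∑ j, ∑ k, ∑ l, ∑ m, ∑ n, mu i j k l * (lam i l m n * lam m n j k))
      = ∑ p : Fin Ns × Fin Ns × Fin Ns × Fin Ns × Fin Ns × Fin Ns,
        mu p.1 p.2.1 p.2.2.1 p.2.2.2.1 * (lam p.1 p.2.2.2.1 p.2.2.2.2.1 p.2.2.2.2.2
          * lam p.2.2.2.2.1 p.2.2.2.2.2 p.2.1 p.2.2.1) := (c6 _).symm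
  have h2 : T3 mu lam lam = ∑ p : Fin Ns × Fin Ns × Fin Ns × Fin Ns × Fin Ns × Fin Ns,
      mu p.1 p.2.1 p.2.2.1 p.2.2.2.1 * lam p.2.2.1 p.2.2.2.1 p.2.2.2.2.1 p.2.2.2.2.2
        * lam p.2.2.2.2.1 p.2.2.2.2.2 p.1 p.2.1 := (c6 _).symm
  rw [h1, h2]
  exact Fintype.sum_equiv
    ⟨fun p => (p.2.1, p.2.2.1, p.1, p.2.2.2.1, p.2.2.2.2.1, p.2.2.2.2.2),
     fun p => (p.2.2.1, p.1, p.2.1, p.2.2.2.1, p.2.2.2.2.1, p.2.2.2.2.2),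
     fun ⟨i,j,k,l,m,n⟩ => rfl, fun ⟨i,j,k,l,m,n⟩ => rfl⟩ _ _
    (fun ⟨i,j,k,l,m,n⟩ => by
      show mu i j k l * (lam i l m n * lam m n j k)
        = mu j k i l * lam i l m n * lam m n j k
      rw [fs_c3 hm i j k l]; ring)

lemma pieceQ1 (y : Fin Ns → Matrix (Fin Nf) (Fin Nf) ℂ) (lam mu : Tens Ns) :
    (∑ i, ∑ j, ∑ k, ∑ l, ∑ m, (1 : ℝ) / 2 * (mu i j k l * (Zw y i m * lam m j k l)))
      = 1 / 2 * ZQ y mu lam := by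
  have h1 : (∑ i, ∑ j, ∑ k, ∑ l, ∑ m, (1 : ℝ) / 2 * (mu i j k l * (Zw y i m * lam m j k l)))
      = ∑ p : Fin Ns × Fin Ns × Fin Ns × Fin Ns × Fin Ns,
        (1 : ℝ) / 2 * (mu p.1 p.2.1 p.2.2.1 p.2.2.2.1
          * (Zw y p.1 p.2.2.2.2 * lam p.2.2.2.2 p.2.1 p.2.2.1 p.2.2.2.1)) := (c5 _).symm
  rw [h1]
  have h2 : (∑ p : Fin Ns × Fin Ns × Fin Ns × Fin Ns × Fin Ns,
      (1 : ℝ) / 2 * (mu p.1 p.2.1 p.2.2.1 p.2.2.2.1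
        * (Zw y p.1 p.2.2.2.2 * lam p.2.2.2.2 p.2.1 p.2.2.1 p.2.2.2.1)))
      = ∑ p : Fin Ns × Fin Ns × Fin Ns × Fin Ns × Fin Ns,
        (1 : ℝ) / 2 * (Zw y p.1 p.2.1 * mu p.1 p.2.2.1 p.2.2.2.1 p.2.2.2.2
          * lam p.2.1 p.2.2.1 p.2.2.2.1 p.2.2.2.2) :=
    Fintype.sum_equiv
      ⟨fun p => (p.1, p.2.2.2.2, p.2.1, p.2.2.1, p.2.2.2.1),
       fun p => (p.1, p.2.2.1, p.2.2.2.1, p.2.2.2.2, p.2.1),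
       fun ⟨i,j,k,l,m⟩ => rfl, fun ⟨i,j,k,l,m⟩ => rfl⟩ _ _
      (fun ⟨i,j,k,l,m⟩ => by
        show (1:ℝ)/2 * (mu i j k l * (Zw y i m * lam m j k l))
          = 1/2 * (Zw y i m * mu i j k l * lam m j k l)
        ring)
  rw [h2, ← Finset.mul_sum]
  exact congrArg (fun x => (1:ℝ)/2 * x)
    (c5 fun i j k l m => Zw y i j * mu i k l m * lam j k l m)

lemma pieceQ2 (y : Fin Ns → Matrix (Fin Nf) (Fin Nf) ℂ) (lam mu : Tens Ns)
    (hl : FullySymm lam) (hm : FullySymm mu) :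
    (∑ i, ∑ j, ∑ k, ∑ l, ∑ m, (1 : ℝ) / 2 * (mu i j k l * (Zw y j m * lam i m k l)))
      = 1 / 2 * ZQ y mu lam := by
  have h1 : (∑ i, ∑ j, ∑ k, ∑ l, ∑ m, (1 : ℝ) / 2 * (mu i j k l * (Zw y j m * lam i m k l)))
      = ∑ p : Fin Ns × Fin Ns × Fin Ns × Fin Ns × Fin Ns,
        (1 : ℝ) / 2 * (mu p.1 p.2.1 p.2.2.1 p.2.2.2.1
          * (Zw y p.2.1 p.2.2.2.2 * lam p.1 p.2.2.2.2 p.2.2.1 p.2.2.2.1)) := (c5 _).symm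
  rw [h1]
  have h2 : (∑ p : Fin Ns × Fin Ns × Fin Ns × Fin Ns × Fin Ns,
      (1 : ℝ) / 2 * (mu p.1 p.2.1 p.2.2.1 p.2.2.2.1
        * (Zw y p.2.1 p.2.2.2.2 * lam p.1 p.2.2.2.2 p.2.2.1 p.2.2.2.1)))
      = ∑ p : Fin Ns × Fin Ns × Fin Ns × Fin Ns × Fin Ns,
        (1 : ℝ) / 2 * (Zw y p.1 p.2.1 * mu p.1 p.2.2.1 p.2.2.2.1 p.2.2.2.2
          * lam p.2.1 p.2.2.1 p.2.2.2.1 p.2.2.2.2) :=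
    Fintype.sum_equiv
      ⟨fun p => (p.2.1, p.2.2.2.2, p.1, p.2.2.1, p.2.2.2.1),
       fun p => (p.2.2.1, p.1, p.2.2.2.1, p.2.2.2.2, p.2.1),
       fun ⟨i,j,k,l,m⟩ => rfl, fun ⟨i,j,k,l,m⟩ => rfl⟩ _ _
      (fun ⟨i,j,k,l,m⟩ => by
        show (1:ℝ)/2 * (mu i j k l * (Zw y j m * lam i m k l))
          = 1/2 * (Zw y j m * mu j i k l * lam m i k l)
        rw [fs1 hm i j k l, fs1 hl i m k l]; ring)
  rw [h2, ← Finset.mul_sum]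
  exact congrArg (fun x => (1:ℝ)/2 * x)
    (c5 fun i j k l m => Zw y i j * mu i k l m * lam j k l m)

lemma pieceQ3 (y : Fin Ns → Matrix (Fin Nf) (Fin Nf) ℂ) (lam mu : Tens Ns)
    (hl : FullySymm lam) (hm : FullySymm mu) :
    (∑ i, ∑ j, ∑ k, ∑ l, ∑ m, (1 : ℝ) / 2 * (mu i j k l * (Zw y k m * lam i j m l)))
      = 1 / 2 * ZQ y mu lam := by
  have h1 : (∑ i, ∑ j, ∑ k, ∑ l, ∑ m, (1 : ℝ) / 2 * (mu i j k l * (Zw y k m * lam i j m l)))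
      = ∑ p : Fin Ns × Fin Ns × Fin Ns × Fin Ns × Fin Ns,
        (1 : ℝ) / 2 * (mu p.1 p.2.1 p.2.2.1 p.2.2.2.1
          * (Zw y p.2.2.1 p.2.2.2.2 * lam p.1 p.2.1 p.2.2.2.2 p.2.2.2.1)) := (c5 _).symm
  rw [h1]
  have h2 : (∑ p : Fin Ns × Fin Ns × Fin Ns × Fin Ns × Fin Ns,
      (1 : ℝ) / 2 * (mu p.1 p.2.1 p.2.2.1 p.2.2.2.1
        * (Zw y p.2.2.1 p.2.2.2.2 * lam p.1 p.2.1 p.2.2.2.2 p.2.2.2.1)))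
      = ∑ p : Fin Ns × Fin Ns × Fin Ns × Fin Ns × Fin Ns,
        (1 : ℝ) / 2 * (Zw y p.1 p.2.1 * mu p.1 p.2.2.1 p.2.2.2.1 p.2.2.2.2
          * lam p.2.1 p.2.2.1 p.2.2.2.1 p.2.2.2.2) :=
    Fintype.sum_equiv
      ⟨fun p => (p.2.2.1, p.2.2.2.2, p.1, p.2.1, p.2.2.2.1),
       fun p => (p.2.2.1, p.2.2.2.1, p.1, p.2.2.2.2, p.2.1),
       fun ⟨i,j,k,l,m⟩ => rfl, fun ⟨i,j,k,l,m⟩ => rfl⟩ _ _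
      (fun ⟨i,j,k,l,m⟩ => by
        show (1:ℝ)/2 * (mu i j k l * (Zw y k m * lam i j m l))
          = 1/2 * (Zw y k m * mu k i j l * lam m i j l)
        rw [fs_c3' hm i j k l, fs_c3' hl i j m l]; ring)
  rw [h2, ← Finset.mul_sum]
  exact congrArg (fun x => (1:ℝ)/2 * x)
    (c5 fun i j k l m => Zw y i j * mu i k l m * lam j k l m)

lemma pieceQ4 (y : Fin Ns → Matrix (Fin Nf) (Fin Nf) ℂ) (lam mu : Tens Ns)
    (hl : FullySymm lam) (hm : FullySymm mu) :
    (∑ i, ∑ j, ∑ k, ∑ l, ∑ m, (1 : ℝ) / 2 * (mu i j k l * (Zw y l m * lam i j k m)))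
      = 1 / 2 * ZQ y mu lam := by
  have h1 : (∑ i, ∑ j, ∑ k, ∑ l, ∑ m, (1 : ℝ) / 2 * (mu i j k l * (Zw y l m * lam i j k m)))
      = ∑ p : Fin Ns × Fin Ns × Fin Ns × Fin Ns × Fin Ns,
        (1 : ℝ) / 2 * (mu p.1 p.2.1 p.2.2.1 p.2.2.2.1
          * (Zw y p.2.2.2.1 p.2.2.2.2 * lam p.1 p.2.1 p.2.2.1 p.2.2.2.2)) := (c5 _).symm
  rw [h1]
  have h2 : (∑ p : Fin Ns × Fin Ns × Fin Ns × Fin Ns × Fin Ns,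
      (1 : ℝ) / 2 * (mu p.1 p.2.1 p.2.2.1 p.2.2.2.1
        * (Zw y p.2.2.2.1 p.2.2.2.2 * lam p.1 p.2.1 p.2.2.1 p.2.2.2.2)))
      = ∑ p : Fin Ns × Fin Ns × Fin Ns × Fin Ns × Fin Ns,
        (1 : ℝ) / 2 * (Zw y p.1 p.2.1 * mu p.1 p.2.2.1 p.2.2.2.1 p.2.2.2.2
          * lam p.2.1 p.2.2.1 p.2.2.2.1 p.2.2.2.2) :=
    Fintype.sum_equiv
      ⟨fun p => (p.2.2.2.1, p.2.2.2.2, p.1, p.2.1, p.2.2.1),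
       fun p => (p.2.2.1, p.2.2.2.1, p.2.2.2.2, p.1, p.2.1),
       fun ⟨i,j,k,l,m⟩ => rfl, fun ⟨i,j,k,l,m⟩ => rfl⟩ _ _
      (fun ⟨i,j,k,l,m⟩ => by
        show (1:ℝ)/2 * (mu i j k l * (Zw y l m * lam i j k m))
          = 1/2 * (Zw y l m * mu l i j k * lam m i j k)
        rw [fs_rot' hm i j k l, fs_rot' hl i j k m]; ring)
  rw [h2, ← Finset.mul_sum]
  exact congrArg (fun x => (1:ℝ)/2 * x)
    (c5 fun i j k l m => Zw y i j * mu i k l m * lam j k l m)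

lemma contract (ε : ℝ) (y : Fin Ns → Matrix (Fin Nf) (Fin Nf) ℂ) (lam mu : Tens Ns)
    (hl : FullySymm lam) (hm : FullySymm mu) :
    (∑ i, ∑ j, ∑ k, ∑ l, mu i j k l * betaLamW ε lam y i j k l)
      = -ε * S2 lam mu + 3 * T3 mu lam lam - 4 * XL y mu + 2 * ZQ y mu lam := by
  have key : ∀ i j k l, mu i j k l * betaLamW ε lam y i j k l
      = -ε * (lam i j k l * mu i j k l)
        - 4 * (Xw y i j k l * mu i j k l)
        + (∑ m, ∑ n, mu i j k l * (lam i j m n * lam m n k l))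
        + (∑ m, ∑ n, mu i j k l * (lam i k m n * lam m n j l))
        + (∑ m, ∑ n, mu i j k l * (lam i l m n * lam m n j k))
        + (∑ m, (1 : ℝ) / 2 * (mu i j k l * (Zw y i m * lam m j k l)))
        + (∑ m, (1 : ℝ) / 2 * (mu i j k l * (Zw y j m * lam i m k l)))
        + (∑ m, (1 : ℝ) / 2 * (mu i j k l * (Zw y k m * lam i j m l)))
        + (∑ m, (1 : ℝ) / 2 * (mu i j k l * (Zw y l m * lam i j k m))) := by
    intro i j k l
    simp only [betaLamW, Finset.sum_add_distrib]
    simp only [← Finset.mul_sum]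
    ring
  simp only [key, Finset.sum_add_distrib, Finset.sum_sub_distrib]
  rw [pieceS ε lam mu, pieceX y mu, pieceP1 lam mu hm, pieceP2 lam mu hm,
    pieceP3 lam mu hm, pieceQ1 y lam mu, pieceQ2 y lam mu hl hm,
    pieceQ3 y lam mu hl hm, pieceQ4 y lam mu hl hm]
  ring

lemma iter2 (A B C D : ℝ) :
    iteratedDeriv 2 (fun t : ℝ => A + t * B + t ^ 2 * C + t ^ 3 * D) 0 = 2 * C := by
  have h1 : (deriv fun t : ℝ => A + t * B + t ^ 2 * C + t ^ 3 * D)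
      = fun t : ℝ => B + 2 * t * C + 3 * t ^ 2 * D := by
    funext t
    have hb : HasDerivAt (fun t : ℝ => t * B) B t := by
      simpa using (hasDerivAt_id t).mul_const B
    have hc : HasDerivAt (fun t : ℝ => t ^ 2 * C) (2 * t * C) t := by
      simpa using (hasDerivAt_pow 2 t).mul_const C
    have hd : HasDerivAt (fun t : ℝ => t ^ 3 * D) (3 * t ^ 2 * D) t := by
      simpa using (hasDerivAt_pow 3 t).mul_const D
    exact (((hb.const_add A).add hc).add hd).deriv
  show iteratedDeriv (1 + 1) _ _ = _
  rw [iteratedDeriv_succ, iteratedDeriv_one, h1]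
  have hb : HasDerivAt (fun t : ℝ => 2 * t * C) (2 * C) 0 := by
    simpa using ((hasDerivAt_id (0:ℝ)).const_mul 2).mul_const C
  have hd : HasDerivAt (fun t : ℝ => 3 * t ^ 2 * D) 0 0 := by
    simpa using ((hasDerivAt_pow 2 (0:ℝ)).const_mul 3).mul_const D
  have h2 := ((hb.const_add B).add hd).deriv
  rw [add_zero] at h2
  exact h2

end SVAux

/-- Second-variation identity -/
theorem second_variation_identity {Ns Nf : ℕ} (hNs : 1 ≤ Ns) (hNf : 1 ≤ Nf)
    (ε : ℝ) (y : Fin Ns → Matrix (Fin Nf) (Fin Nf) ℂ) (hy : ∀ i, (y i)ᵀ = y i)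
    (lam1 lam2 : Fin Ns → Fin Ns → Fin Ns → Fin Ns → ℝ)
    (h1sym : FullySymm lam1) (h2sym : FullySymm lam2)
    (h1 : ∀ i j k l, betaLamW ε lam1 y i j k l = 0)
    (h2 : ∀ i j k l, betaLamW ε lam2 y i j k l = 0) :
    iteratedDeriv 2 (fun t : ℝ =>
        Afun ε (fun i j k l => lam1 i j k l + t * (lam1 i j k l - lam2 i j k l)) y) 0
      = 6 * (Afun ε lam2 y - Afun ε lam1 y) := by
  obtain ⟨mu, hmu⟩ : ∃ mu : SVAux.Tens Ns,
      mu = fun i j k l => lam1 i j k l - lam2 i j k l := ⟨_, rfl⟩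
  have hmusym : FullySymm mu := by
    intro i j k l
    refine ⟨?_, ?_, ?_⟩ <;> simp only [hmu]
    · rw [(h1sym i j k l).1, (h2sym i j k l).1]
    · rw [(h1sym i j k l).2.1, (h2sym i j k l).2.1]
    · rw [(h1sym i j k l).2.2, (h2sym i j k l).2.2]
  have hgoal : (fun t : ℝ =>
        Afun ε (fun i j k l => lam1 i j k l + t * (lam1 i j k l - lam2 i j k l)) y)
      = fun t : ℝ => Afun ε (fun i j k l => lam1 i j k l + t * mu i j k l) y := by
    simp only [hmu]
  rw [hgoal]
  have hfe := funext fun t : ℝ => SVAux.Afun_expand y ε lam1 mu t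
  rw [hfe, SVAux.iter2]
  have hl2 : lam2 = fun i j k l => lam1 i j k l + (-1 : ℝ) * mu i j k l := by
    funext i j k l; simp only [hmu]; ring
  have hA2 := SVAux.Afun_expand y ε lam1 mu (-1)
  rw [← hl2] at hA2
  have e1 : (∑ i, ∑ j, ∑ k, ∑ l, mu i j k l * betaLamW ε lam1 y i j k l) = 0 := by
    simp [h1]
  rw [SVAux.contract ε y lam1 mu h1sym hmusym] at e1
  have e2 : (∑ i, ∑ j, ∑ k, ∑ l, mu i j k l * betaLamW ε lam2 y i j k l) = 0 := by
    simp [h2]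
  rw [SVAux.contract ε y lam2 mu h2sym hmusym] at e2
  rw [hl2] at e2
  simp only [SVAux.S2_addl, SVAux.T3_addm, SVAux.T3_addr, SVAux.ZQ_addr] at e2
  rw [SVAux.T3_cyc mu lam1 mu] at e2
  rw [hA2]
  rw [SVAux.S2_comm mu lam1, SVAux.ZQ_comm y lam1 mu,
    SVAux.T3_cyc lam1 mu lam1, SVAux.T3_cyc lam1 lam1 mu,
    SVAux.T3_cyc lam1 mu mu, SVAux.T3_cyc mu lam1 mu]
  linear_combination 4 * e1 + 2 * e2
end
end

section
/- Doubling effect for fixed points with interacting fermions: suppose β^λ(λ, y) = 0 and β^λ(a λ, y) = 0 for some real number a ≠ 1, and suppose b₃ = X_{iijj} ≠ 0. Then a ≠ 0, a₁ + 2S > 0, and a (a₁ + 2S) = −4 b₃, i.e. a = −4 b₃ / (a₁ + 2S); in particular, if b₃ > 0 then a < 0. -/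
open Matrix

noncomputable section

set_option maxHeartbeats 2000000

/-- Doubling effect for fixed points with interacting fermions: if both `λ` and `a λ`
solve the quartic fixed-point equation with `a ≠ 1` and `b₃ = X_{iijj} ≠ 0`, then
`a ≠ 0`, `a₁ + 2S > 0`, and `a (a₁ + 2S) = −4 b₃`; in particular `a < 0` when `b₃ > 0`. -/
theorem doubling_effect {Ns Nf : ℕ} (hNs : 1 ≤ Ns) (hNf : 1 ≤ Nf)
    (ε : ℝ) (lam : Fin Ns → Fin Ns → Fin Ns → Fin Ns → ℝ)
    (y : Fin Ns → Matrix (Fin Nf) (Fin Nf) ℂ)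
    (hsym : FullySymm lam) (hy : ∀ i, (y i)ᵀ = y i)
    (a : ℝ) (ha : a ≠ 1)
    (hfp : ∀ i j k l, betaLamW ε lam y i j k l = 0)
    (hfpa : ∀ i j k l, betaLamW ε (fun p q r s => a * lam p q r s) y i j k l = 0)
    (hb3 : b3inv y ≠ 0) :
    a ≠ 0 ∧ 0 < a1inv lam + 2 * Sinv lam
      ∧ a * (a1inv lam + 2 * Sinv lam) = -4 * b3inv y
      ∧ (0 < b3inv y → a < 0) := by
  -- pair swap symmetry
  have hps : ∀ i j k l, lam i j k l = lam k l i j := by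
    intro i j k l
    calc lam i j k l = lam i k j l := (hsym i j k l).2.1
      _ = lam k i j l := (hsym i k j l).1
      _ = lam k i l j := (hsym k i j l).2.2
      _ = lam k l i j := (hsym k i l j).2.1
  -- key pointwise identity: a * Q_{ijkl} + 4 X_{ijkl} = 0
  have key : ∀ i j k l, a * (∑ m, ∑ n, (lam i j m n * lam m n k l
      + lam i k m n * lam m n j l + lam i l m n * lam m n j k))
      + 4 * Xw y i j k l = 0 := by
    intro i j k l
    have h1 := hfp i j k l
    have h2 := hfpa i j k l
    unfold betaLamW at h1 h2
    have e1 : (∑ m, ∑ n, (a * lam i j m n * (a * lam m n k l)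
        + a * lam i k m n * (a * lam m n j l) + a * lam i l m n * (a * lam m n j k)))
        = a ^ 2 * ∑ m, ∑ n, (lam i j m n * lam m n k l
        + lam i k m n * lam m n j l + lam i l m n * lam m n j k) := by
      rw [Finset.mul_sum]
      refine Finset.sum_congr rfl fun m _ => ?_
      rw [Finset.mul_sum]
      exact Finset.sum_congr rfl fun n _ => by ring
    have e2 : (∑ m, (Zw y i m * (a * lam m j k l) + Zw y j m * (a * lam i m k l)
        + Zw y k m * (a * lam i j m l) + Zw y l m * (a * lam i j k m)))
        = a * ∑ m, (Zw y i m * lam m j k l + Zw y j m * lam i m k l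
        + Zw y k m * lam i j m l + Zw y l m * lam i j k m) := by
      rw [Finset.mul_sum]
      exact Finset.sum_congr rfl fun m _ => by ring
    rw [e1, e2] at h2
    have h0 : (1 - a) * (a * (∑ m, ∑ n, (lam i j m n * lam m n k l
        + lam i k m n * lam m n j l + lam i l m n * lam m n j k))
        + 4 * Xw y i j k l) = 0 := by linear_combination a * h1 - h2
    rcases mul_eq_zero.mp h0 with h | h
    · exact absurd (by linarith : a = 1) ha
    · exact h
  -- rewritten contracted version
  have key2 : ∀ i k : Fin Ns, a * (∑ m, ∑ n, lam i i m n * lam k k m n)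
      + 2 * a * (∑ m, ∑ n, lam i k m n * lam i k m n) + 4 * Xw y i i k k = 0 := by
    intro i k
    have h := key i i k k
    have e : (∑ m, ∑ n, (lam i i m n * lam m n k k
        + lam i k m n * lam m n i k + lam i k m n * lam m n i k))
        = (∑ m, ∑ n, lam i i m n * lam k k m n)
          + 2 * ∑ m, ∑ n, lam i k m n * lam i k m n := by
      rw [Finset.mul_sum, ← Finset.sum_add_distrib]
      refine Finset.sum_congr rfl fun m _ => ?_
      rw [Finset.mul_sum, ← Finset.sum_add_distrib]
      refine Finset.sum_congr rfl fun n _ => ?_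
      rw [hps m n k k, hps m n i k]; ring
    rw [e] at h
    linarith
  -- sum it over i, k
  set A := ∑ i, ∑ k, ∑ m, ∑ n, lam i i m n * lam k k m n with hAdef
  set B := ∑ i, ∑ k, ∑ m, ∑ n, lam i k m n * lam i k m n with hBdef
  have hsum : a * A + 2 * a * B + 4 * b3inv y = 0 := by
    have h0 : ∑ i : Fin Ns, ∑ k : Fin Ns,
        (a * (∑ m, ∑ n, lam i i m n * lam k k m n)
        + 2 * a * (∑ m, ∑ n, lam i k m n * lam i k m n) + 4 * Xw y i i k k) = 0 :=
      Finset.sum_eq_zero fun i _ => Finset.sum_eq_zero fun k _ => key2 i k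
    have h1 : a * A + 2 * a * B + 4 * ∑ i, ∑ k, Xw y i i k k
        = ∑ i : Fin Ns, ∑ k : Fin Ns,
        (a * (∑ m, ∑ n, lam i i m n * lam k k m n)
        + 2 * a * (∑ m, ∑ n, lam i k m n * lam i k m n) + 4 * Xw y i i k k) := by
      rw [hAdef, hBdef]
      simp only [Finset.mul_sum, Finset.sum_add_distrib]
    rw [h0] at h1
    unfold b3inv
    linarith
  -- identify A with a1inv
  have hcomm : ∀ (f : Fin Ns → Fin Ns → Fin Ns → Fin Ns → ℝ),
      (∑ m, ∑ n, ∑ i, ∑ j, f m n i j) = ∑ i, ∑ j, ∑ m, ∑ n, f m n i j := by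
    intro f
    calc (∑ m, ∑ n, ∑ i, ∑ j, f m n i j)
        = ∑ m, ∑ i, ∑ n, ∑ j, f m n i j :=
          Finset.sum_congr rfl fun m _ => Finset.sum_comm
      _ = ∑ i, ∑ m, ∑ n, ∑ j, f m n i j := Finset.sum_comm
      _ = ∑ i, ∑ m, ∑ j, ∑ n, f m n i j :=
          Finset.sum_congr rfl fun i _ => Finset.sum_congr rfl fun m _ => Finset.sum_comm
      _ = ∑ i, ∑ j, ∑ m, ∑ n, f m n i j :=
          Finset.sum_congr rfl fun i _ => Finset.sum_comm
  have hA : A = a1inv lam := by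
    unfold a1inv
    simp_rw [Finset.sum_mul_sum]
    rw [hcomm (fun m n i j => lam i i m n * lam j j m n)]
  have hB : B = Sinv lam := by
    unfold Sinv
    simp_rw [pow_two]
    exact hBdef
  -- nonnegativity
  have hSnn : 0 ≤ Sinv lam :=
    Finset.sum_nonneg fun i _ => Finset.sum_nonneg fun j _ => Finset.sum_nonneg fun k _ =>
      Finset.sum_nonneg fun l _ => sq_nonneg _
  have ha1nn : 0 ≤ a1inv lam :=
    Finset.sum_nonneg fun m _ => Finset.sum_nonneg fun n _ => mul_self_nonneg _
  have hmain : a * (a1inv lam + 2 * Sinv lam) = -4 * b3inv y := by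
    linear_combination hsum - a * hA - 2 * a * hB
  have hane : a ≠ 0 := by
    intro h
    rw [h, zero_mul] at hmain
    exact hb3 (by linarith)
  have hPne : a1inv lam + 2 * Sinv lam ≠ 0 := by
    intro h
    rw [h, mul_zero] at hmain
    exact hb3 (by linarith)
  have hPpos : 0 < a1inv lam + 2 * Sinv lam :=
    lt_of_le_of_ne (by linarith) (Ne.symm hPne)
  refine ⟨hane, hPpos, hmain, fun hb3pos => ?_⟩
  nlinarith
end
end

section
/- Bound from the quartic beta function: if β^λ_{ijkl}(λ, y) = 0 for all i, j, k, l, then S + (1/2) b₂ − (1/2) b₁ − 2 b₃ + b̃₀ ≤ (1/8) Ns ε². -/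
open Matrix

noncomputable section

/-- Swap a triple sum: bring the first summation innermost. -/
lemma sum_swap3 {ι κ μ M : Type*} [Fintype ι] [Fintype κ] [Fintype μ] [AddCommMonoid M]
    (F : ι → κ → μ → M) :
    ∑ a, ∑ b, ∑ c, F a b c = ∑ b, ∑ c, ∑ a, F a b c := by
  rw [Finset.sum_comm]
  exact Finset.sum_congr rfl fun b _ => Finset.sum_comm

/-- Swap a quadruple sum: bring the last two summations outermost. -/
lemma sum_swap4 {ι κ μ ν M : Type*} [Fintype ι] [Fintype κ] [Fintype μ] [Fintype ν]
    [AddCommMonoid M] (F : ι → κ → μ → ν → M) :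
    ∑ a, ∑ b, ∑ c, ∑ d, F a b c d = ∑ c, ∑ d, ∑ a, ∑ b, F a b c d := by
  rw [show (∑ a, ∑ b, ∑ c, ∑ d, F a b c d) = ∑ a, ∑ c, ∑ d, ∑ b, F a b c d from
    Finset.sum_congr rfl fun a _ => sum_swap3 _]
  exact sum_swap3 _

/-- Bound from the quartic beta function: at a quartic fixed point,
`S + (1/2) b₂ − (1/2) b₁ − 2 b₃ + b̃₀ ≤ (1/8) Ns ε²`. -/
theorem quartic_beta_bound {Ns Nf : ℕ} (hNs : 1 ≤ Ns) (hNf : 1 ≤ Nf)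
    (ε : ℝ) (lam : Fin Ns → Fin Ns → Fin Ns → Fin Ns → ℝ)
    (y : Fin Ns → Matrix (Fin Nf) (Fin Nf) ℂ)
    (hsym : FullySymm lam) (hy : ∀ i, (y i)ᵀ = y i)
    (hfp : ∀ i j k l, betaLamW ε lam y i j k l = 0) :
    Sinv lam + (1 / 2) * b2inv lam y - (1 / 2) * b1inv y - 2 * b3inv y + btilde0 lam y
      ≤ (1 / 8) * (Ns : ℝ) * ε ^ 2 := by
  classical
  -- basic symmetry facts
  have h12 : ∀ i j k l, lam i j k l = lam j i k l := fun i j k l => (hsym i j k l).1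
  have h23 : ∀ i j k l, lam i j k l = lam i k j l := fun i j k l => (hsym i j k l).2.1
  have h34 : ∀ i j k l, lam i j k l = lam i j l k := fun i j k l => (hsym i j k l).2.2
  have hp : ∀ i j k l, lam i j k l = lam k l i j := by
    intro i j k l
    rw [h23 i j k l, h12 i k j l, h34 k i j l, h23 k i l j]
  have hN : (0:ℝ) < (Ns:ℝ) := by exact_mod_cast Nat.lt_of_lt_of_le Nat.zero_lt_one hNs
  have hNne : (Ns:ℝ) ≠ 0 := ne_of_gt hN
  -- pointwise expansion of the contracted beta function
  have point : ∀ i k : Fin Ns, betaLamW ε lam y i i k k =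
      -ε * lam i i k k + (∑ m, ∑ n, lam i i m n * lam m n k k)
        + 2 * (∑ m, ∑ n, lam i k m n * lam m n i k)
        - 4 * Xw y i i k k
        + (∑ m, Zw y i m * lam i m k k) + (∑ m, Zw y k m * lam k m i i) := by
    intro i k
    unfold betaLamW
    rw [show (∑ m, (Zw y i m * lam m i k k + Zw y i m * lam i m k k
          + Zw y k m * lam i i m k + Zw y k m * lam i i k m))
        = ∑ m, (2 * (Zw y i m * lam i m k k) + 2 * (Zw y k m * lam k m i i)) from
      Finset.sum_congr rfl fun m _ => by
        rw [h12 m i k k, hp i i m k, h12 m k i i, hp i i k m]; ring]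
    simp only [Finset.sum_add_distrib, ← Finset.mul_sum]
    ring
  -- the four contracted quadratic pieces
  have hT1 : (∑ i, ∑ k, ∑ m, ∑ n, lam i i m n * lam m n k k) = a1inv lam := by
    rw [sum_swap4]
    unfold a1inv
    refine Finset.sum_congr rfl fun m _ => Finset.sum_congr rfl fun n _ => ?_
    rw [Finset.sum_mul_sum]
    exact Finset.sum_congr rfl fun a _ => Finset.sum_congr rfl fun b _ => by
      rw [hp m n b b]
  have hT2 : (∑ i, ∑ k, ∑ m, ∑ n, lam i k m n * lam m n i k) = Sinv lam := by
    unfold Sinv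
    refine Finset.sum_congr rfl fun i _ => Finset.sum_congr rfl fun k _ =>
      Finset.sum_congr rfl fun m _ => Finset.sum_congr rfl fun n _ => ?_
    rw [hp m n i k]; ring
  have hQ1 : (∑ i, ∑ k, ∑ m, Zw y i m * lam i m k k)
      = ∑ i, ∑ j, Zw y i j * ∑ k, lam i j k k := by
    refine Finset.sum_congr rfl fun i _ => ?_
    rw [Finset.sum_comm]
    exact Finset.sum_congr rfl fun m _ => by rw [Finset.mul_sum]
  have hQ2 : (∑ i, ∑ k, ∑ m, Zw y k m * lam k m i i)
      = ∑ i, ∑ j, Zw y i j * ∑ k, lam i j k k := by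
    rw [sum_swap3]
    exact Finset.sum_congr rfl fun k _ => Finset.sum_congr rfl fun m _ => by
      rw [Finset.mul_sum]
  -- the key trace identity from the fixed point equation
  have hsum0 : (∑ i, ∑ k, betaLamW ε lam y i i k k) = 0 := by
    simp only [hfp, Finset.sum_const_zero]
  have hexp : (∑ i, ∑ k, betaLamW ε lam y i i k k)
      = -ε * a0inv lam + (a1inv lam + 2 * Sinv lam) - 4 * b3inv y
        + 2 * (∑ i, ∑ j, Zw y i j * ∑ k, lam i j k k) := by
    refine (Finset.sum_congr rfl fun i _ => Finset.sum_congr rfl fun k _ => point i k).trans ?_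
    simp only [Finset.sum_add_distrib, Finset.sum_sub_distrib, ← Finset.mul_sum]
    rw [hT1, hT2, hQ1, hQ2,
      show (∑ i, ∑ k, Xw y i i k k) = b3inv y from rfl,
      show (∑ i, ∑ k, lam i i k k) = a0inv lam from rfl]
    ring
  have hkey : -ε * a0inv lam + (a1inv lam + 2 * Sinv lam) - 4 * b3inv y
      + 2 * (∑ i, ∑ j, Zw y i j * ∑ k, lam i j k k) = 0 := by
    rw [← hexp]; exact hsum0
  -- expansion of b2
  have hA1' : (∑ i, ∑ j, (∑ k, lam i j k k) ^ 2) = a1inv lam := by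
    unfold a1inv
    refine Finset.sum_congr rfl fun i _ => Finset.sum_congr rfl fun j _ => ?_
    rw [show (∑ k, lam i j k k) = ∑ k, lam k k i j from
      Finset.sum_congr rfl fun k _ => hp i j k k]
    ring
  have hb2 : b2inv lam y = a1inv lam
      + 2 * (∑ i, ∑ j, Zw y i j * ∑ k, lam i j k k) + (∑ i, ∑ j, Zw y i j ^ 2)
      - (a0inv lam + b0inv y) ^ 2 / (Ns:ℝ) := by
    unfold b2inv
    have point2 : ∀ i j : Fin Ns,
        ((∑ k, lam i j k k) - a0inv lam / (Ns:ℝ) * (if i = j then 1 else 0)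
          + Zw y i j - b0inv y / (Ns:ℝ) * (if i = j then 1 else 0)) ^ 2
        = ((∑ k, lam i j k k) ^ 2 + Zw y i j ^ 2
            + 2 * (Zw y i j * ∑ k, lam i j k k))
          + (if i = j then (((a0inv lam + b0inv y) / (Ns:ℝ)) ^ 2
              - 2 * ((a0inv lam + b0inv y) / (Ns:ℝ)) * ((∑ k, lam j j k k) + Zw y j j))
            else 0) := by
      intro i j
      by_cases h : i = j
      · subst h; simp only [eq_self_iff_true, if_true]; ring
      · simp only [if_neg h]; ring
    refine (Finset.sum_congr rfl fun i _ => Finset.sum_congr rfl fun j _ =>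
      point2 i j).trans ?_
    simp only [Finset.sum_add_distrib, Finset.sum_ite_eq, Finset.mem_univ, if_true,
      Finset.sum_sub_distrib, ← Finset.mul_sum, Finset.sum_const, Finset.card_univ,
      Fintype.card_fin, nsmul_eq_mul]
    rw [hA1',
      show (∑ x : Fin Ns, ∑ k : Fin Ns, lam x x k k) = a0inv lam from rfl,
      show (∑ x : Fin Ns, Zw y x x) = b0inv y from rfl]
    field_simp
    ring
  -- put everything together
  have hmain : Sinv lam + (1 / 2) * b2inv lam y - (1 / 2) * b1inv y - 2 * b3inv y
      + btilde0 lam y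
      = (1/2) * (ε * a0inv lam) - (a0inv lam) ^ 2 / (2 * (Ns:ℝ)) := by
    rw [hb2]; unfold b1inv btilde0
    linear_combination (1/2) * hkey
  rw [hmain]
  have hid : (1/8) * (Ns:ℝ) * ε ^ 2
      - ((1/2) * (ε * a0inv lam) - (a0inv lam) ^ 2 / (2 * (Ns:ℝ)))
      = (2 * a0inv lam - (Ns:ℝ) * ε) ^ 2 / (8 * (Ns:ℝ)) := by
    field_simp
    ring
  have hnn : (0:ℝ) ≤ (2 * a0inv lam - (Ns:ℝ) * ε) ^ 2 / (8 * (Ns:ℝ)) := by positivity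
  linarith [hid, hnn]
end
end

section
/- Bound from the Yukawa beta function: if β^y_i(y) = 0 for all i, then b₁ + 4 b₃ − 12 Y ≤ (1/4) Ns ε²; more precisely, b₁ + 4 b₃ − 12 Y = (1/4) Ns ε² − (1/Ns)(b₀ − (1/2) Ns ε)². -/
open Matrix

noncomputable section

-- ======== auxiliary lemmas ========
namespace YBaux

lemma mconj_mul {Nf : ℕ} (A B : Matrix (Fin Nf) (Fin Nf) ℂ) :
    mconj (A * B) = mconj A * mconj B := Matrix.map_mul

lemma mconj_mconj {Nf : ℕ} (A : Matrix (Fin Nf) (Fin Nf) ℂ) : mconj (mconj A) = A := by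
  ext a b; simp [mconj]

lemma trace_mconj {Nf : ℕ} (A : Matrix (Fin Nf) (Fin Nf) ℂ) :
    Matrix.trace (mconj A) = starRingEnd ℂ (Matrix.trace A) := by
  simp [mconj, Matrix.trace, Matrix.diag, map_sum]

lemma mconj_transpose {Nf : ℕ} (A : Matrix (Fin Nf) (Fin Nf) ℂ) :
    (mconj A)ᵀ = mconj Aᵀ := by
  ext a b; simp [mconj, Matrix.transpose_apply]

/-- complex `Tr(y_a ȳ_b)` -/
def cq {Ns Nf : ℕ} (y : Fin Ns → Matrix (Fin Nf) (Fin Nf) ℂ) (a b : Fin Ns) : ℂ :=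
  Matrix.trace (y a * mconj (y b))

/-- complex `Tr(y_a ȳ_b y_c ȳ_d)` -/
def tq {Ns Nf : ℕ} (y : Fin Ns → Matrix (Fin Nf) (Fin Nf) ℂ) (a b c d : Fin Ns) : ℂ :=
  Matrix.trace (y a * (mconj (y b) * (y c * mconj (y d))))

lemma fact2 {Ns Nf : ℕ} (y : Fin Ns → Matrix (Fin Nf) (Fin Nf) ℂ) (i j : Fin Ns) :
    Zw y i j = 2 * (cq y j i).re := by
  have h2 : Matrix.trace (y i * mconj (y j))
      = starRingEnd ℂ (Matrix.trace (y j * mconj (y i))) := by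
    rw [← trace_mconj, mconj_mul, mconj_mconj, Matrix.trace_mul_comm]
  rw [Zw, Matrix.trace_add, Matrix.trace_mul_comm (mconj (y i)), h2]
  simp [cq, Complex.add_re]; ring

lemma fact1 {Ns Nf : ℕ} (y : Fin Ns → Matrix (Fin Nf) (Fin Nf) ℂ)
    (hy : ∀ i, (y i)ᵀ = y i) (i j : Fin Ns) :
    tq y i j j i = tq y j j i i := by
  have hyc : ∀ k, (mconj (y k))ᵀ = mconj (y k) := fun k => by rw [mconj_transpose, hy]
  unfold tq
  calc Matrix.trace (y i * (mconj (y j) * (y j * mconj (y i))))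
      = Matrix.trace ((y i * (mconj (y j) * (y j * mconj (y i))))ᵀ) :=
        (Matrix.trace_transpose _).symm
    _ = Matrix.trace ((y j * mconj (y i))ᵀ * (y i * mconj (y j))ᵀ) := by
        rw [show y i * (mconj (y j) * (y j * mconj (y i)))
            = (y i * mconj (y j)) * (y j * mconj (y i)) by noncomm_ring,
          Matrix.transpose_mul]
    _ = Matrix.trace ((mconj (y i) * y j) * (mconj (y j) * y i)) := by
        rw [Matrix.transpose_mul, Matrix.transpose_mul, hy i, hy j, hyc i, hyc j]
    _ = Matrix.trace (y j * (mconj (y j) * (y i * mconj (y i)))) := by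
        rw [show (mconj (y i) * y j) * (mconj (y j) * y i)
            = mconj (y i) * (y j * mconj (y j) * y i) by noncomm_ring,
          Matrix.trace_mul_comm,
          show y j * mconj (y j) * y i * mconj (y i)
            = y j * (mconj (y j) * (y i * mconj (y i))) by noncomm_ring]

-- permutation sum machinery
lemma sp4 (g : Equiv.Perm (Fin 4) → ℂ) :
    ∑ σ, g σ = ∑ p : Fin 4, ∑ e : Equiv.Perm (Fin 3), g (Equiv.Perm.decomposeFin.symm (p,e)) := by
  rw [← Equiv.Perm.decomposeFin.symm.sum_comp, Fintype.sum_prod_type]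
lemma sp3 (g : Equiv.Perm (Fin 3) → ℂ) :
    ∑ σ, g σ = ∑ p : Fin 3, ∑ e : Equiv.Perm (Fin 2), g (Equiv.Perm.decomposeFin.symm (p,e)) := by
  rw [← Equiv.Perm.decomposeFin.symm.sum_comp, Fintype.sum_prod_type]
lemma sp2 (g : Equiv.Perm (Fin 2) → ℂ) :
    ∑ σ, g σ = ∑ p : Fin 2, ∑ e : Equiv.Perm (Fin 1), g (Equiv.Perm.decomposeFin.symm (p,e)) := by
  rw [← Equiv.Perm.decomposeFin.symm.sum_comp, Fintype.sum_prod_type]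

set_option maxHeartbeats 2000000 in
lemma perm24 (f : Fin 4 → Fin 4 → Fin 4 → Fin 4 → ℂ) :
    ∑ σ : Equiv.Perm (Fin 4), f (σ 0) (σ 1) (σ 2) (σ 3) =
      f 0 1 2 3 + f 0 1 3 2 + f 0 2 1 3 + f 0 2 3 1 + f 0 3 2 1 + f 0 3 1 2 +
      f 1 0 2 3 + f 1 0 3 2 + f 1 2 0 3 + f 1 2 3 0 + f 1 3 2 0 + f 1 3 0 2 +
      f 2 1 0 3 + f 2 1 3 0 + f 2 0 1 3 + f 2 0 3 1 + f 2 3 0 1 + f 2 3 1 0 +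
      f 3 1 2 0 + f 3 1 0 2 + f 3 2 1 0 + f 3 2 0 1 + f 3 0 2 1 + f 3 0 1 2 := by
  simp only [sp4, sp3, sp2, Fintype.sum_unique]
  simp only [Fin.sum_univ_four, Fin.sum_univ_three, Fin.sum_univ_two]
  simp only [show (3:Fin 4) = (2:Fin 3).succ by decide, show (2:Fin 4) = (1:Fin 3).succ by decide,
    show (1:Fin 4) = (0:Fin 3).succ by decide, show (2:Fin 3) = (1:Fin 2).succ by decide,
    show (1:Fin 3) = (0:Fin 2).succ by decide, show (1:Fin 2) = (0:Fin 1).succ by decide,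
    Equiv.Perm.decomposeFin_symm_apply_zero, Equiv.Perm.decomposeFin_symm_apply_succ,
    Equiv.Perm.one_apply, Equiv.swap_apply_def]
  norm_num [Fin.ext_iff]
  ring

lemma quarter_re (x s : ℂ) (h : x = 4 * s) : 1 / 4 * x.re = s.re := by
  rw [h]; simp [Complex.mul_re]

set_option maxHeartbeats 1000000 in
lemma Xw_iijj {Ns Nf : ℕ} (y : Fin Ns → Matrix (Fin Nf) (Fin Nf) ℂ) (i j : Fin Ns) :
    Xw y i i j j = (tq y i i j j + tq y i j i j + tq y i j j i
      + tq y j i i j + tq y j i j i + tq y j j i i).re := by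
  rw [Xw, perm24 (fun a b c d => Matrix.trace (y (![i, i, j, j] a) * mconj (y (![i, i, j, j] b)) *
      (y (![i, i, j, j] c) * mconj (y (![i, i, j, j] d)))))]
  have e0 : (![i, i, j, j] : Fin 4 → Fin Ns) 0 = i := rfl
  have e1 : (![i, i, j, j] : Fin 4 → Fin Ns) 1 = i := rfl
  have e2 : (![i, i, j, j] : Fin 4 → Fin Ns) 2 = j := rfl
  have e3 : (![i, i, j, j] : Fin 4 → Fin Ns) 3 = j := rfl
  simp only [e0, e1, e2, e3]
  apply quarter_re
  simp only [tq, mul_assoc]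
  ring

end YBaux

set_option maxHeartbeats 1000000

/-- Bound from the Yukawa beta function: at a Yukawa fixed point,
`b₁ + 4 b₃ − 12 Y = (1/4) Ns ε² − (1/Ns)(b₀ − (1/2) Ns ε)² ≤ (1/4) Ns ε²`. -/
theorem yukawa_beta_bound {Ns Nf : ℕ} (hNs : 1 ≤ Ns) (hNf : 1 ≤ Nf)
    (ε : ℝ) (y : Fin Ns → Matrix (Fin Nf) (Fin Nf) ℂ)
    (hy : ∀ i, (y i)ᵀ = y i)
    (hfp : ∀ i, betaYW ε y i = 0) :
    b1inv y + 4 * b3inv y - 12 * Yinv y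
        = (1 / 4) * (Ns : ℝ) * ε ^ 2
          - (1 / (Ns : ℝ)) * (b0inv y - (1 / 2) * (Ns : ℝ) * ε) ^ 2
      ∧ b1inv y + 4 * b3inv y - 12 * Yinv y ≤ (1 / 4) * (Ns : ℝ) * ε ^ 2 := by
  have hNs0 : ((Ns : ℝ)) ≠ 0 := by
    have : (0:ℝ) < (Ns:ℝ) := by exact_mod_cast Nat.lt_of_lt_of_le Nat.zero_lt_one hNs
    linarith
  have hexp : ∀ i, Matrix.trace (betaYW ε y i * mconj (y i))
      = -(1/2) * (ε:ℂ) * YBaux.cq y i i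
        + (1/2) * ∑ j, (YBaux.tq y j j i i + YBaux.tq y i j j i + 4 * YBaux.tq y j i j i)
        + (1/2) * ∑ j, (Zw y i j : ℂ) * YBaux.cq y j i := by
    intro i
    simp only [betaYW, Matrix.add_mul, Matrix.smul_mul, Finset.sum_mul, Matrix.trace_add,
      Matrix.trace_smul, Matrix.trace_sum, smul_eq_mul, YBaux.cq, YBaux.tq, mul_assoc]
  have h0 : (-(1/2) * (ε:ℂ)) * (∑ i, YBaux.cq y i i)
      + (1/2) * (∑ i, ∑ j, (YBaux.tq y j j i i + YBaux.tq y i j j i + 4 * YBaux.tq y j i j i))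
      + (1/2) * (∑ i, ∑ j, (Zw y i j : ℂ) * YBaux.cq y j i) = 0 := by
    have hz : ∑ i, Matrix.trace (betaYW ε y i * mconj (y i)) = 0 := by
      simp [hfp]
    rw [Finset.sum_congr rfl (fun i _ => hexp i)] at hz
    rw [← hz, Finset.mul_sum, Finset.mul_sum, Finset.mul_sum, ← Finset.sum_add_distrib,
      ← Finset.sum_add_distrib]
  have h := congrArg Complex.re h0
  simp [Complex.add_re, Complex.mul_re, Complex.re_sum, Complex.re_ofReal_mul,
    Complex.ofReal_re, Complex.ofReal_im] at h
  -- component identities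
  have hmid : ∑ i : Fin Ns, ∑ j : Fin Ns, ((YBaux.tq y j j i i).re + (YBaux.tq y i j j i).re
        + 4 * (YBaux.tq y j i j i).re)
      = 2 * (∑ i, ∑ j, (YBaux.tq y i i j j).re) + 4 * (∑ i, ∑ j, (YBaux.tq y i j i j).re) := by
    have e1 : ∑ i : Fin Ns, ∑ j : Fin Ns, (YBaux.tq y j j i i).re
        = ∑ i, ∑ j, (YBaux.tq y i i j j).re := Finset.sum_comm
    have e2 : ∑ i : Fin Ns, ∑ j : Fin Ns, (YBaux.tq y i j j i).re
        = ∑ i, ∑ j, (YBaux.tq y i i j j).re := by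
      rw [Finset.sum_congr rfl fun i _ => Finset.sum_congr rfl fun j _ => by
        rw [YBaux.fact1 y hy i j]]
      exact Finset.sum_comm
    have e3 : ∑ i : Fin Ns, ∑ j : Fin Ns, (YBaux.tq y j i j i).re
        = ∑ i, ∑ j, (YBaux.tq y i j i j).re := Finset.sum_comm
    simp only [Finset.sum_add_distrib, ← Finset.mul_sum]
    rw [e1, e2, e3]; ring
  have hZZt : ∀ i j, Zw y i j * (YBaux.cq y j i).re = 2⁻¹ * Zw y i j ^ 2 := by
    intro i j
    rw [YBaux.fact2 y i j]; ring
  have hZZ : ∑ i : Fin Ns, ∑ j : Fin Ns, Zw y i j * (YBaux.cq y j i).re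
      = 2⁻¹ * ∑ i, ∑ j, Zw y i j ^ 2 := by
    simp only [hZZt, ← Finset.mul_sum]
  have hb0 : ∑ i : Fin Ns, (YBaux.cq y i i).re = b0inv y / 2 := by
    rw [b0inv, Finset.sum_congr rfl fun i _ => YBaux.fact2 y i i, ← Finset.mul_sum]
    ring
  have hYinv : Yinv y = ∑ i, ∑ j, (YBaux.tq y i i j j).re := by
    simp [Yinv, YBaux.tq, mul_assoc, Complex.re_sum]
  have hb3 : b3inv y = 4 * (∑ i, ∑ j, (YBaux.tq y i i j j).re)
      + 2 * (∑ i, ∑ j, (YBaux.tq y i j i j).re) := by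
    rw [b3inv, Finset.sum_congr rfl (fun i _ => Finset.sum_congr rfl
      (fun j _ => YBaux.Xw_iijj y i j))]
    simp only [Complex.add_re, Finset.sum_add_distrib]
    have c1 : ∑ i : Fin Ns, ∑ j : Fin Ns, (YBaux.tq y i j j i).re
        = ∑ i, ∑ j, (YBaux.tq y i i j j).re := by
      rw [Finset.sum_congr rfl fun i _ => Finset.sum_congr rfl fun j _ => by
        rw [YBaux.fact1 y hy i j]]
      exact Finset.sum_comm
    have c2 : ∑ i : Fin Ns, ∑ j : Fin Ns, (YBaux.tq y j i i j).re
        = ∑ i, ∑ j, (YBaux.tq y i i j j).re := by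
      rw [Finset.sum_congr rfl fun i _ => Finset.sum_congr rfl fun j _ => by
        rw [YBaux.fact1 y hy j i]]
    have c3 : ∑ i : Fin Ns, ∑ j : Fin Ns, (YBaux.tq y j j i i).re
        = ∑ i, ∑ j, (YBaux.tq y i i j j).re := Finset.sum_comm
    have c4 : ∑ i : Fin Ns, ∑ j : Fin Ns, (YBaux.tq y j i j i).re
        = ∑ i, ∑ j, (YBaux.tq y i j i j).re := Finset.sum_comm
    rw [c1, c2, c3, c4]; ring
  rw [hmid, hZZ, hb0] at h
  have hkey : (∑ i : Fin Ns, ∑ j : Fin Ns, Zw y i j ^ 2)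
      + 4 * (∑ i, ∑ j, (YBaux.tq y i i j j).re) + 8 * (∑ i, ∑ j, (YBaux.tq y i j i j).re)
      = ε * b0inv y := by linarith
  have hmain : b1inv y + 4 * b3inv y - 12 * Yinv y
      = ε * b0inv y - b0inv y ^ 2 / (Ns : ℝ) := by
    rw [b1inv, hb3, hYinv]; linarith
  constructor
  · rw [hmain]; field_simp; ring
  · rw [hmain]
    have hsq : 0 ≤ (b0inv y - (1/2) * (Ns:ℝ) * ε)^2 / (Ns:ℝ) := by positivity
    have : ε * b0inv y - b0inv y ^ 2 / (Ns : ℝ)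
        = (1/4) * (Ns:ℝ) * ε^2 - (b0inv y - (1/2) * (Ns:ℝ) * ε)^2 / (Ns:ℝ) := by
      field_simp; ring
    rw [this]; linarith
end
end
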